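/- arXiv:2408.04727 — 4 statements merged into one kernel-verified Lean document; each statement's English description precedes it below -/
import Mathlib

section
/- Let q ≥ 1 be an integer, let G be a partially q-colored graph, let v be a free vertex of G with neighbors enumerated as v₁,…,v_d, and let ℓ₁ ≠ ℓ₂ be two colors. For each i = 1,…,d let Ĝ_i be the partially q-colored graph obtained from G − v by adding, for each j ≠ i, a new pinned leaf adjacent to v_j colored ℓ₂ if j < i and colored ℓ₁ if j > i, and adding a new free leaf v̂_i adjacent to v_i. Then for every w ∈ ℂ the telescoping identity Z^{ℓ₁}_{G,v}(w) · Π_{i=1}^{d} Z^{ℓ₂}_{Ĝ_i,v̂_i}(w) = Z^{ℓ₂}_{G,v}(w) · Π_{i=1}^{d} Z^{ℓ₁}_{Ĝ_i,v̂_i}(w) holds. -/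
attribute [local instance 10] Classical.propDecidable

noncomputable section

/-- A partially `q`-colored graph: a finite simple graph together with a set `S` of
pinned vertices and a pinning `pin` (only its values on `S` are relevant). -/
structure PCG (q : ℕ) where
  V : Type
  fin : Fintype V
  G : SimpleGraph V
  S : Finset V
  pin : V → Fin q

namespace PCG

variable {q : ℕ}

instance (H : PCG q) : Fintype H.V := H.fin

/-- colorings agreeing with the pinning on the pinned set -/
def admissible (H : PCG q) (ψ : H.V → Fin q) : Prop :=
  ∀ u ∈ H.S, ψ u = H.pin u

/-- the number of monochromatic edges of a coloring -/
def mono (H : PCG q) (ψ : H.V → Fin q) : ℕ :=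
  ((Finset.univ : Finset (Sym2 H.V)).filter
    (fun e => e ∈ H.G.edgeSet ∧ (e.map ψ).IsDiag)).card

/-- the (complex) Potts partition function of a partially colored graph -/
def Z (H : PCG q) (w : ℂ) : ℂ :=
  ∑ ψ ∈ Finset.univ.filter (fun ψ : H.V → Fin q => H.admissible ψ), w ^ H.mono ψ

/-- the partition function restricted to colorings giving `v` the color `j` -/
def Zc (H : PCG q) (v : H.V) (j : Fin q) (w : ℂ) : ℂ :=
  ∑ ψ ∈ Finset.univ.filter
      (fun ψ : H.V → Fin q => H.admissible ψ ∧ ψ v = j), w ^ H.mono ψ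

/-- the real Potts partition function -/
def Zr (H : PCG q) (w : ℝ) : ℝ :=
  ∑ ψ ∈ Finset.univ.filter (fun ψ : H.V → Fin q => H.admissible ψ), w ^ H.mono ψ

/-- the real partition function restricted to colorings giving `v` the color `j` -/
def Zcr (H : PCG q) (v : H.V) (j : Fin q) (w : ℝ) : ℝ :=
  ∑ ψ ∈ Finset.univ.filter
      (fun ψ : H.V → Fin q => H.admissible ψ ∧ ψ v = j), w ^ H.mono ψ

/-- the marginal probability that `v` receives the color `j` -/
def Pr (H : PCG q) (v : H.V) (j : Fin q) (w : ℝ) : ℝ :=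
  H.Zcr v j w / H.Zr w

/-- the neighborhood of a vertex -/
def nbhd (H : PCG q) (v : H.V) : Finset H.V :=
  Finset.univ.filter (fun u => H.G.Adj v u)

/-- the degree of a vertex -/
def deg (H : PCG q) (v : H.V) : ℕ := (H.nbhd v).card

/-- the free degree of a vertex: its number of free neighbors -/
def freeDeg (H : PCG q) (v : H.V) : ℕ :=
  ((H.nbhd v).filter (fun u => u ∉ H.S)).card

/-- the number of pinned neighbors of `v` colored `j` -/
def cvec (H : PCG q) (v : H.V) (j : Fin q) : ℕ :=
  ((H.nbhd v).filter (fun u => u ∈ H.S ∧ H.pin u = j)).card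

/-- the color `j` is blocked at `v`: some pinned neighbor of `v` is colored `j` -/
def blockedAt (H : PCG q) (v : H.V) (j : Fin q) : Prop :=
  ∃ u ∈ H.nbhd v, u ∈ H.S ∧ H.pin u = j

/-- the set of colors that are free at `v` -/
def freeColors (H : PCG q) (v : H.V) : Finset (Fin q) :=
  Finset.univ.filter (fun j => ¬ H.blockedAt v j)

/-- the graph has maximum degree at most `Δ` -/
def maxDegLE (H : PCG q) (Δ : ℕ) : Prop := ∀ u, H.deg u ≤ Δ

/-- the class 𝒢•: `H` is connected, has max degree at most `Δ`, its pinned vertices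
are leaves and form an independent set, and `v` is a free vertex -/
def GoodPair (Δ : ℕ) (H : PCG q) (v : H.V) : Prop :=
  H.G.Connected ∧ H.maxDegLE Δ ∧ (∀ u ∈ H.S, H.deg u = 1) ∧
    (∀ u ∈ H.S, ∀ u' ∈ H.S, ¬ H.G.Adj u u') ∧ v ∉ H.S

/-- `Ḡ`: the graph obtained by deleting all pinned neighbors of `v` -/
def bar (H : PCG q) (v : H.V) : PCG q where
  V := ↥{u : H.V | ¬(u ∈ H.S ∧ H.G.Adj v u)}
  fin := inferInstance
  G := H.G.induce {u : H.V | ¬(u ∈ H.S ∧ H.G.Adj v u)}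
  S := Finset.univ.filter (fun u => u.1 ∈ H.S)
  pin := fun u => H.pin u.1

/-- the vertex `v` viewed as a vertex of `Ḡ` -/
def barVert (H : PCG q) (v : H.V) : (H.bar v).V :=
  ⟨v, fun h => H.G.irrefl h.2⟩

/-- `G − v`: the graph obtained by deleting the vertex `v` -/
def deleteVert (H : PCG q) (v : H.V) : PCG q where
  V := ↥{u : H.V | u ≠ v}
  fin := inferInstance
  G := H.G.induce {u : H.V | u ≠ v}
  S := Finset.univ.filter (fun u => u.1 ∈ H.S)
  pin := fun u => H.pin u.1

/-- `G^{+ℓ}`: attach a new pinned leaf of color `ℓ` to the vertex `v` -/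
def addLeaf (H : PCG q) (v : H.V) (ℓ : Fin q) : PCG q where
  V := Option H.V
  fin := inferInstance
  G := SimpleGraph.fromRel (fun a b =>
    (∃ u u' : H.V, a = some u ∧ b = some u' ∧ H.G.Adj u u') ∨ (a = none ∧ b = some v))
  S := insert none (H.S.image some)
  pin := fun a => a.elim ℓ H.pin

/-- the complex log-ratio `R_{G,v;i,j}` -/
def logRatio (H : PCG q) (v : H.V) (i j : Fin q) (w : ℂ) : ℂ :=
  Complex.log (H.Zc v i w / H.Zc v j w)

/-- the vector `P_{G,v}(w) ∈ ℝ^{q−1}` of marginal differences -/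
def Pvec (H : PCG q) (v : H.V) (w : ℝ) (j : Fin (q - 1)) : ℝ :=
  (H.addLeaf v ⟨0, by have := j.2; omega⟩).Pr (some v) (Fin.castLE (Nat.sub_le q 1) j) w -
  (H.addLeaf v ⟨q - 1, by have := j.2; omega⟩).Pr (some v) (Fin.castLE (Nat.sub_le q 1) j) w

/-- the graph `Ĝ_i` of the telescoping procedure: delete `v` from `G`, attach to the
`j`-th neighbor of `v` (for `j ≠ i`) a pinned leaf colored `ℓ₂` if `j < i` and `ℓ₁`
if `j > i`, and attach a free leaf (the vertex `Sum.inr i`) to the `i`-th neighbor. -/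
def telescope (H : PCG q) (v : H.V) {d : ℕ} (nbrs : Fin d → H.V)
    (ℓ₁ ℓ₂ : Fin q) (i : Fin d) : PCG q where
  V := ↥{u : H.V | u ≠ v} ⊕ Fin d
  fin := inferInstance
  G := SimpleGraph.fromRel (fun a b =>
    (∃ u u' : ↥{u : H.V | u ≠ v}, a = Sum.inl u ∧ b = Sum.inl u' ∧ H.G.Adj u.1 u'.1) ∨
    (∃ (u : ↥{u : H.V | u ≠ v}) (j : Fin d), a = Sum.inl u ∧ b = Sum.inr j ∧ u.1 = nbrs j))
  S := (Finset.univ.filter (fun u : ↥{u : H.V | u ≠ v} => u.1 ∈ H.S)).image Sum.inl ∪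
       (Finset.univ.filter (fun j : Fin d => j ≠ i)).image Sum.inr
  pin := Sum.elim (fun u => H.pin u.1) (fun j => if (j : ℕ) < (i : ℕ) then ℓ₂ else ℓ₁)

end PCG

/-- extend a vector indexed by `Fin (q-1)` to `Fin q` by a zero last coordinate -/
def extendLast (q : ℕ) (x : Fin (q - 1) → ℂ) : Fin q → ℂ :=
  fun j => if h : (j : ℕ) < q - 1 then x ⟨j, h⟩ else 0

/-- the polynomial `P_c(w,x) = w^{c₁+1}e^{x₁} + Σ_{j=2}^{q−1} w^{c_j}e^{x_j} + w^{c_q}` -/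
def Ppoly (q : ℕ) (c : Fin q → ℕ) (w : ℂ) (x : Fin (q - 1) → ℂ) : ℂ :=
  ∑ j : Fin q, w ^ (c j + if (j : ℕ) = 0 then 1 else 0) * Complex.exp (extendLast q x j)

/-- the polynomial `Q_c(w,x) = w^{c₁}e^{x₁} + Σ_{j=2}^{q−1} w^{c_j}e^{x_j} + w^{c_q+1}` -/
def Qpoly (q : ℕ) (c : Fin q → ℕ) (w : ℂ) (x : Fin (q - 1) → ℂ) : ℂ :=
  ∑ j : Fin q, w ^ (c j + if (j : ℕ) = q - 1 then 1 else 0) * Complex.exp (extendLast q x j)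

/-- the map `F_{w,c}(x) = Log (P_c(w,x)/Q_c(w,x))` -/
def Fmap (q : ℕ) (c : Fin q → ℕ) (w : ℂ) (x : Fin (q - 1) → ℂ) : ℂ :=
  Complex.log (Ppoly q c w x / Qpoly q c w x)

/-- real version of `extendLast` -/
def extendLastR (q : ℕ) (x : Fin (q - 1) → ℝ) : Fin q → ℝ :=
  fun j => if h : (j : ℕ) < q - 1 then x ⟨j, h⟩ else 0

/-- real version of `Ppoly` -/
def PpolyR (q : ℕ) (c : Fin q → ℕ) (w : ℝ) (x : Fin (q - 1) → ℝ) : ℝ :=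
  ∑ j : Fin q, w ^ (c j + if (j : ℕ) = 0 then 1 else 0) * Real.exp (extendLastR q x j)

/-- real version of `Qpoly` -/
def QpolyR (q : ℕ) (c : Fin q → ℕ) (w : ℝ) (x : Fin (q - 1) → ℝ) : ℝ :=
  ∑ j : Fin q, w ^ (c j + if (j : ℕ) = q - 1 then 1 else 0) * Real.exp (extendLastR q x j)

/-- real version of `Fmap`, i.e. `F_{w,c}` viewed as a real function on `ℝ^{q−1}` -/
def FmapR (q : ℕ) (c : Fin q → ℕ) (w : ℝ) (x : Fin (q - 1) → ℝ) : ℝ :=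
  Real.log (PpolyR q c w x / QpolyR q c w x)

/-! Once `v` (in `G`) or `v̂_i` (in `Ĝ_i`) is forced to take a colour, it acts on `G − v`
exactly like a family of pinned leaves, one at each neighbour `v_j`. So every factor in the
identity is a partition function of `G − v` with pinned leaves at `v_1, …, v_d`. Let `T_k` colour
the leaf at `v_j` by `ℓ₂` for `j ≤ k` and by `ℓ₁` for `j > k`. Then `Z^{ℓ₁}_{G,v} = T_0`,
`Z^{ℓ₂}_{G,v} = T_d`, `Z^{ℓ₁}_{Ĝ_i,v̂_i} = T_{i-1}` and `Z^{ℓ₂}_{Ĝ_i,v̂_i} = T_i`, so both sides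
equal `T_0 T_1 ⋯ T_d`. -/

theorem update_ite_lt_self {α : Type*} {d : ℕ} (x y : α) (i : Fin d) :
    Function.update (fun j : Fin d => if (j : ℕ) < i then y else x) i y =
      fun j : Fin d => if (j : ℕ) < i + 1 then y else x := by
  funext j
  rcases eq_or_ne j i with rfl | hj
  · simp
  · rw [Function.update_of_ne hj]
    simp only [Nat.lt_succ_iff_lt_or_eq, Fin.val_ne_of_ne hj, or_false]

namespace PCG

open Finset

variable {q : ℕ}

theorem mono_eq_card_filter_edgeFinset (H : PCG q) (ψ : H.V → Fin q) :
    H.mono ψ = #{s ∈ H.G.edgeFinset | (s.map ψ).IsDiag} := by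
  unfold mono
  congr 1
  ext s
  simp

structure IsEdgeExtension (K H : PCG q) (e : K.V ↪ H.V) {d : ℕ} (a : Fin d → K.V)
    (x : Fin d → H.V) : Prop where
  adj_iff : ∀ b c, H.G.Adj (e b) (e c) ↔ K.G.Adj b c
  adj_extra : ∀ j, H.G.Adj (e (a j)) (x j)
  extra_notMem : ∀ j, x j ∉ Set.range e
  extra_injective : Function.Injective fun j => s(e (a j), x j)
  exists_of_adj : ∀ y z, H.G.Adj y z → y ∉ Set.range e → ∃ j, x j = y ∧ e (a j) = z

namespace IsEdgeExtension

variable {K H : PCG q} {e : K.V ↪ H.V} {d : ℕ} {a : Fin d → K.V} {x : Fin d → H.V}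

theorem edgeFinset_eq (h : IsEdgeExtension K H e a x) :
    H.G.edgeFinset = K.G.edgeFinset.map e.sym2Map ∪ univ.image fun j => s(e (a j), x j) := by
  ext s
  induction s using Sym2.ind with
  | _ y z =>
    simp only [SimpleGraph.mem_edgeFinset, SimpleGraph.mem_edgeSet, mem_union, mem_map,
      mem_image, mem_univ, true_and, Sym2.exists, Function.Embedding.sym2Map_apply, Sym2.map_mk]
    constructor
    · intro hyz
      by_cases hy : y ∈ Set.range e
      · by_cases hz : z ∈ Set.range e
        · obtain ⟨b, rfl⟩ := hy
          obtain ⟨c, rfl⟩ := hz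
          exact .inl ⟨b, c, (h.adj_iff b c).mp hyz, rfl⟩
        · obtain ⟨j, rfl, rfl⟩ := h.exists_of_adj z y hyz.symm hz
          exact .inr ⟨j, rfl⟩
      · obtain ⟨j, rfl, rfl⟩ := h.exists_of_adj y z hyz hy
        exact .inr ⟨j, Sym2.eq_swap⟩
    · rw [← SimpleGraph.mem_edgeSet]
      rintro (⟨b, c, hbc, hs⟩ | ⟨j, hs⟩) <;> rw [← hs]
      exacts [(h.adj_iff b c).mpr hbc, h.adj_extra j]

theorem disjoint (h : IsEdgeExtension K H e a x) :
    Disjoint (K.G.edgeFinset.map e.sym2Map) (univ.image fun j => s(e (a j), x j)) := by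
  simp only [disjoint_left, mem_map, mem_image, mem_univ, true_and, not_exists]
  rintro _ ⟨t, -, rfl⟩ j hj
  induction t using Sym2.ind with
  | _ b c =>
    have hmem : x j ∈ e.sym2Map s(b, c) := hj ▸ Sym2.mem_mk_right _ _
    rcases Sym2.mem_iff.mp hmem with hb | hc
    exacts [h.extra_notMem j ⟨b, hb.symm⟩, h.extra_notMem j ⟨c, hc.symm⟩]

theorem mono_eq (h : IsEdgeExtension K H e a x) (ψ : H.V → Fin q) :
    H.mono ψ = K.mono (ψ ∘ e) + #{j | ψ (e (a j)) = ψ (x j)} := by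
  rw [mono_eq_card_filter_edgeFinset, mono_eq_card_filter_edgeFinset, h.edgeFinset_eq,
    filter_union, card_union_of_disjoint (disjoint_filter_filter h.disjoint), filter_map,
    filter_image, card_map, card_image_of_injective _ h.extra_injective]
  simp [Sym2.map_map]

end IsEdgeExtension

/-- The partition function of `K` after attaching, for each `j`, a new pinned leaf of color
`c j` to the vertex `a j`. -/
def ZLeaves (K : PCG q) {d : ℕ} (a : Fin d → K.V) (c : Fin d → Fin q) (w : ℂ) : ℂ :=
  ∑ σ ∈ univ.filter K.admissible, w ^ (K.mono σ + #{j | σ (a j) = c j})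

theorem isEdgeExtension_deleteVert {H : PCG q} {v : H.V} {d : ℕ} {nbrs : Fin d → H.V}
    (hinj : Function.Injective nbrs) (hadj : ∀ j, H.G.Adj v (nbrs j))
    (hsurj : ∀ u, H.G.Adj v u → ∃ j, nbrs j = u) :
    IsEdgeExtension (H.deleteVert v) H (.subtype _) (fun j => ⟨nbrs j, (hadj j).ne'⟩)
      (fun _ => v) where
  adj_iff _ _ := Iff.rfl
  adj_extra j := (hadj j).symm
  extra_notMem _ := fun ⟨u, hu⟩ => u.2 hu
  extra_injective _ _ h := hinj (Sym2.congr_left.mp h)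
  exists_of_adj y z hyz hy := by
    obtain rfl : y = v := by
      by_contra hne
      exact hy ⟨⟨y, hne⟩, rfl⟩
    obtain ⟨j, rfl⟩ := hsurj z hyz
    exact ⟨j, rfl, rfl⟩

theorem Zc_eq_ZLeaves_deleteVert {H : PCG q} {v : H.V} (hv : v ∉ H.S) {d : ℕ}
    {nbrs : Fin d → H.V} (hinj : Function.Injective nbrs) (hadj : ∀ j, H.G.Adj v (nbrs j))
    (hsurj : ∀ u, H.G.Adj v u → ∃ j, nbrs j = u) (ℓ : Fin q) (w : ℂ) :
    H.Zc v ℓ w = (H.deleteVert v).ZLeaves (fun j => ⟨nbrs j, (hadj j).ne'⟩) (fun _ => ℓ) w := by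
  refine sum_nbij' (fun ψ u => ψ u.1) (fun σ u => if h : u = v then ℓ else σ ⟨u, h⟩)
    ?_ ?_ ?_ ?_ ?_
  · intro ψ hψ
    simp only [mem_filter, mem_univ, true_and] at hψ ⊢
    exact fun u hu => hψ.1 u.1 (mem_filter.mp hu).2
  · intro σ hσ
    refine mem_filter.mpr ⟨mem_univ _, fun u hu => ?_, dif_pos rfl⟩
    have hne : u ≠ v := fun h => hv (h ▸ hu)
    exact (dif_neg hne).trans ((mem_filter.mp hσ).2 ⟨u, hne⟩ (mem_filter.mpr ⟨mem_univ _, hu⟩))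
  · intro ψ hψ
    funext u
    by_cases h : u = v
    · simp [h, (mem_filter.mp hψ).2.2]
    · simp [h]
  · intro σ _
    funext u
    exact dif_neg u.2
  · intro ψ hψ
    rw [(isEdgeExtension_deleteVert hinj hadj hsurj).mono_eq ψ, (mem_filter.mp hψ).2.2]
    rfl

section Telescope

variable {H : PCG q} {v : H.V} {d : ℕ} {nbrs : Fin d → H.V} (ℓ₁ ℓ₂ : Fin q) (i : Fin d)

theorem telescope_adj_inl_inl (a b : ↥{u : H.V | u ≠ v}) :
    (H.telescope v nbrs ℓ₁ ℓ₂ i).G.Adj (.inl a) (.inl b) ↔ H.G.Adj a b := by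
  simp only [telescope, SimpleGraph.fromRel_adj, Sum.inl.injEq, exists_and_left,
    exists_eq_left', reduceCtorEq, false_and, exists_false, and_false, or_false]
  exact ⟨fun ⟨_, h⟩ => h.elim id .symm,
    fun h => ⟨fun hab => h.ne (congrArg Subtype.val (Sum.inl_injective hab)), .inl h⟩⟩

theorem telescope_adj_inl_inr (a : ↥{u : H.V | u ≠ v}) (j : Fin d) :
    (H.telescope v nbrs ℓ₁ ℓ₂ i).G.Adj (.inl a) (.inr j) ↔ a.1 = nbrs j := by
  simp [telescope, SimpleGraph.fromRel_adj, -Subtype.exists]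

theorem not_telescope_adj_inr_inr (j j' : Fin d) :
    ¬ (H.telescope v nbrs ℓ₁ ℓ₂ i).G.Adj (.inr j) (.inr j') := by
  simp [telescope, SimpleGraph.fromRel_adj]

theorem isEdgeExtension_telescope (hadj : ∀ j, H.G.Adj v (nbrs j)) :
    IsEdgeExtension (H.deleteVert v) (H.telescope v nbrs ℓ₁ ℓ₂ i) .inl
      (fun j => ⟨nbrs j, (hadj j).ne'⟩) .inr where
  adj_iff := telescope_adj_inl_inl ℓ₁ ℓ₂ i
  adj_extra j := (telescope_adj_inl_inr ℓ₁ ℓ₂ i _ j).mpr rfl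
  extra_notMem _ := fun ⟨_, h⟩ => Sum.inl_ne_inr h
  extra_injective _ _ h := by
    rcases Sym2.eq_iff.mp h with ⟨-, h⟩ | ⟨h, -⟩
    exacts [Sum.inr_injective h, absurd h Sum.inl_ne_inr]
  exists_of_adj y z hyz hy := by
    rcases y with b | j
    · exact absurd ⟨b, rfl⟩ hy
    rcases z with b | j'
    · exact ⟨j, rfl, congrArg Sum.inl
        (Subtype.ext ((telescope_adj_inl_inr ℓ₁ ℓ₂ i b j).mp hyz.symm).symm)⟩
    · exact absurd hyz (not_telescope_adj_inr_inr ℓ₁ ℓ₂ i j j')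

theorem inl_mem_telescope_S (u : ↥{u : H.V | u ≠ v}) :
    .inl u ∈ (H.telescope v nbrs ℓ₁ ℓ₂ i).S ↔ u.1 ∈ H.S := by
  change Sum.inl u ∈ (_ ∪ _ : Finset (↥{u : H.V | u ≠ v} ⊕ Fin d)) ↔ _
  simp

theorem inr_mem_telescope_S (j : Fin d) :
    .inr j ∈ (H.telescope v nbrs ℓ₁ ℓ₂ i).S ↔ j ≠ i := by
  change Sum.inr j ∈ (_ ∪ _ : Finset (↥{u : H.V | u ≠ v} ⊕ Fin d)) ↔ _
  simp

theorem Zc_telescope_eq_ZLeaves (hadj : ∀ j, H.G.Adj v (nbrs j)) (ℓ : Fin q) (w : ℂ) :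
    (H.telescope v nbrs ℓ₁ ℓ₂ i).Zc (.inr i) ℓ w =
      (H.deleteVert v).ZLeaves (fun j => ⟨nbrs j, (hadj j).ne'⟩)
        (Function.update (fun j => if (j : ℕ) < i then ℓ₂ else ℓ₁) i ℓ) w := by
  set c := Function.update (fun j : Fin d => if (j : ℕ) < i then ℓ₂ else ℓ₁) i ℓ
  symm
  refine sum_nbij' (fun σ => Sum.elim σ c) (fun ψ u => ψ (.inl u)) ?_ ?_ ?_ ?_ ?_
  · intro σ hσ
    refine mem_filter.mpr ⟨mem_univ _, fun x hx => ?_, show c i = ℓ from Function.update_self ..⟩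
    rcases x with u | j
    · exact (mem_filter.mp hσ).2 u
        (mem_filter.mpr ⟨mem_univ _, (inl_mem_telescope_S ℓ₁ ℓ₂ i u).mp hx⟩)
    · exact (show c j = _ from Function.update_of_ne ((inr_mem_telescope_S ℓ₁ ℓ₂ i j).mp hx) _ _)
  · intro ψ hψ
    exact mem_filter.mpr ⟨mem_univ _, fun u hu =>
      (mem_filter.mp hψ).2.1 _ ((inl_mem_telescope_S ℓ₁ ℓ₂ i u).mpr (mem_filter.mp hu).2)⟩
  · intro σ _
    rfl
  · intro ψ hψ
    obtain ⟨-, hadm, hi⟩ := mem_filter.mp hψ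
    funext x
    rcases x with u | j
    · rfl
    by_cases hj : j = i
    · subst hj
      exact (show c j = ℓ from Function.update_self ..).trans hi.symm
    · exact (show c j = _ from Function.update_of_ne hj _ _).trans
        (hadm _ ((inr_mem_telescope_S ℓ₁ ℓ₂ i j).mpr hj)).symm
  · intro σ _
    exact congrArg (w ^ ·) ((isEdgeExtension_telescope ℓ₁ ℓ₂ i hadj).mono_eq (Sum.elim σ c)).symm

end Telescope

end PCG

theorem telescoping_general (q : ℕ) (H : PCG q) (v : H.V) (hv : v ∉ H.S)
    (d : ℕ) (nbrs : Fin d → H.V) (hinj : Function.Injective nbrs)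
    (hadj : ∀ j : Fin d, H.G.Adj v (nbrs j))
    (hsurj : ∀ u : H.V, H.G.Adj v u → ∃ j : Fin d, nbrs j = u)
    (ℓ₁ ℓ₂ : Fin q) (w : ℂ) :
    H.Zc v ℓ₁ w * ∏ i : Fin d, (H.telescope v nbrs ℓ₁ ℓ₂ i).Zc (Sum.inr i) ℓ₂ w =
    H.Zc v ℓ₂ w * ∏ i : Fin d, (H.telescope v nbrs ℓ₁ ℓ₂ i).Zc (Sum.inr i) ℓ₁ w := by
  let T : Fin (d + 1) → ℂ := fun k => (H.deleteVert v).ZLeaves (fun j => ⟨nbrs j, (hadj j).ne'⟩)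
    (fun j => if (j : ℕ) < k then ℓ₂ else ℓ₁) w
  have hfirst : H.Zc v ℓ₁ w = T 0 := by
    simp [T, PCG.Zc_eq_ZLeaves_deleteVert hv hinj hadj hsurj]
  have hlast : H.Zc v ℓ₂ w = T (Fin.last d) := by
    simp [T, PCG.Zc_eq_ZLeaves_deleteVert hv hinj hadj hsurj]
  have hsucc (i : Fin d) : (H.telescope v nbrs ℓ₁ ℓ₂ i).Zc (Sum.inr i) ℓ₂ w = T i.succ := by
    rw [PCG.Zc_telescope_eq_ZLeaves ℓ₁ ℓ₂ i hadj, update_ite_lt_self]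
    rfl
  have hcast (i : Fin d) : (H.telescope v nbrs ℓ₁ ℓ₂ i).Zc (Sum.inr i) ℓ₁ w = T i.castSucc := by
    rw [PCG.Zc_telescope_eq_ZLeaves ℓ₁ ℓ₂ i hadj, Function.update_eq_self_iff.mpr (by simp)]
    rfl
  simp only [hfirst, hlast, hsucc, hcast]
  rw [← Fin.prod_univ_succ, mul_comm, ← Fin.prod_univ_castSucc]

/-- The telescoping identity: with `Ĝ_i = H.telescope v nbrs ℓ₁ ℓ₂ i` and free leaf
`v̂_i = Sum.inr i`, one has
`Z^{ℓ₁}_{G,v}(w) · Π_i Z^{ℓ₂}_{Ĝ_i,v̂_i}(w) = Z^{ℓ₂}_{G,v}(w) · Π_i Z^{ℓ₁}_{Ĝ_i,v̂_i}(w)`. -/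
theorem telescoping (q : ℕ) (hq : 1 ≤ q) (H : PCG q) (v : H.V) (hv : v ∉ H.S)
    (d : ℕ) (nbrs : Fin d → H.V) (hinj : Function.Injective nbrs)
    (hadj : ∀ j : Fin d, H.G.Adj v (nbrs j))
    (hsurj : ∀ u : H.V, H.G.Adj v u → ∃ j : Fin d, nbrs j = u)
    (ℓ₁ ℓ₂ : Fin q) (hne : ℓ₁ ≠ ℓ₂) (w : ℂ) :
    H.Zc v ℓ₁ w * ∏ i : Fin d, (H.telescope v nbrs ℓ₁ ℓ₂ i).Zc (Sum.inr i) ℓ₂ w =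
    H.Zc v ℓ₂ w * ∏ i : Fin d, (H.telescope v nbrs ℓ₁ ℓ₂ i).Zc (Sum.inr i) ℓ₁ w :=
  telescoping_general q H v hv d nbrs hinj hadj hsurj ℓ₁ ℓ₂ w
end
end

section
/- Let Δ ≥ 1 and q > Δ + 1 be integers, let w ∈ [0,1], and let (H,v) ∈ 𝒢•_{Δ,q} be such that Z^j_{H̄,v}(w) > 0 for every color j ∈ {1,…,q} and Z_{H^{+1}}(w) > 0 and Z_{H^{+q}}(w) > 0. Let c = c_{H,v} ∈ ℕ^q, and let R ∈ ℝ^{q−1} be defined by R_j = log(Z^j_{H̄,v}(w)/Z^q_{H̄,v}(w)). Then F_{w,c}, viewed as a real function on ℝ^{q−1}, is differentiable at R and for every j ∈ {1,…,q−1} its partial derivative satisfies ∂F_{w,c}/∂x_j (R) = P_{H^{+1},w}[Φ(v)=j] − P_{H^{+q},w}[Φ(v)=j]; that is, ∇F_{w,c}(R) = P_{H,v}(w). -/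
attribute [local instance 10] Classical.propDecidable

noncomputable section

/-!
Attaching a pinned leaf of color `ℓ` to `v` multiplies the color-`j` part of the partition
function by `w` exactly when `j = ℓ`, and deleting the pinned neighbors of `v` (leaves hanging
off `v`) divides it by `w ^ c_j`. Hence `Z^j_{H^{+ℓ},v} = w^{c_j + [j = ℓ]} Z^j_{H̄,v}`, and
`P_{H^{+ℓ}}[Φ(v) = j]` is the `j`-th of these weighted terms divided by their sum.

On the analytic side, `P_c(w, ·)` and `Q_c(w, ·)` are sums `Σ a_i e^{x_i}` (with `x_q = 0`)
whose weights are exactly those for `ℓ = 1` and `ℓ = q`, so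
`∂_j log (P/Q) = a_j e^{x_j}/P - b_j e^{x_j}/Q`.
At `x = R` we have `e^{R_i} = Z^i_{H̄,v} / Z^q_{H̄,v}`, and the common factor `Z^q_{H̄,v}` cancels.
-/

open Finset

lemma Sym2.mk_mem_range_map {α β : Type*} {f : α → β} {a b : β} :
    s(a, b) ∈ Set.range (Sym2.map f) ↔ a ∈ Set.range f ∧ b ∈ Set.range f := by
  constructor
  · rintro ⟨e, he⟩
    induction e using Sym2.ind with
    | _ x y =>
      rcases Sym2.eq_iff.1 (by simpa using he) with ⟨rfl, rfl⟩ | ⟨rfl, rfl⟩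
      exacts [⟨⟨x, rfl⟩, ⟨y, rfl⟩⟩, ⟨⟨y, rfl⟩, ⟨x, rfl⟩⟩]
  · rintro ⟨⟨x, rfl⟩, ⟨y, rfl⟩⟩
    exact ⟨s(x, y), rfl⟩

namespace PCG

variable {q : ℕ}

lemma mono_eq_mono_add_card_of_embedding {K H : PCG q} (f : K.G ↪g H.G) (ψ : H.V → Fin q) :
    H.mono ψ = K.mono (ψ ∘ f) +
      #{e | e ∈ H.G.edgeSet ∧ (e.map ψ).IsDiag ∧ e ∉ Set.range (Sym2.map f)} := by
  have hinner : ({e | e ∈ H.G.edgeSet ∧ (e.map ψ).IsDiag} : Finset _).filter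
        (· ∈ Set.range (Sym2.map f)) =
      ({e | e ∈ K.G.edgeSet ∧ (e.map (ψ ∘ f)).IsDiag} : Finset _).map
        f.toEmbedding.sym2Map := by
    ext e
    simp only [mem_filter, mem_univ, true_and, mem_map, Set.mem_range]
    constructor
    · rintro ⟨⟨he, hd⟩, e', rfl⟩
      exact ⟨e', ⟨f.map_mem_edgeSet_iff.1 he, by rwa [Sym2.map_map] at hd⟩, rfl⟩
    · rintro ⟨e', ⟨he, hd⟩, rfl⟩
      refine ⟨⟨f.map_mem_edgeSet_iff.2 he, ?_⟩, e', rfl⟩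
      change (Sym2.map ψ (Sym2.map f e')).IsDiag
      rwa [Sym2.map_map]
  rw [mono, ← card_filter_add_card_filter_not (· ∈ Set.range (Sym2.map f)), hinner, card_map,
    mono, filter_filter]
  simp only [and_assoc]

variable (H : PCG q) (v : H.V)

lemma Zr_eq_sum_Zcr (w : ℝ) : H.Zr w = ∑ j : Fin q, H.Zcr v j w := by
  rw [Zr, ← sum_fiberwise _ (fun ψ => ψ v)]
  refine sum_congr rfl fun j _ => ?_
  rw [Zcr, filter_filter]

@[simp]
lemma addLeaf_adj_some_some (ℓ : Fin q) {a b : H.V} :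
    (H.addLeaf v ℓ).G.Adj (some a) (some b) ↔ H.G.Adj a b := by
  simp only [addLeaf, SimpleGraph.fromRel_adj]
  constructor
  · rintro ⟨-, (⟨u, u', ⟨⟩, ⟨⟩, h⟩ | ⟨⟨⟩, -⟩) | (⟨u, u', ⟨⟩, ⟨⟩, h⟩ | ⟨⟨⟩, -⟩)⟩
    exacts [h, h.symm]
  · exact fun h => ⟨by simpa using h.ne, .inl (.inl ⟨a, b, rfl, rfl, h⟩)⟩

@[simp]
lemma addLeaf_adj_none_some (ℓ : Fin q) {a : H.V} :
    (H.addLeaf v ℓ).G.Adj none (some a) ↔ a = v := by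
  simp [addLeaf, SimpleGraph.fromRel_adj, eq_comm]

@[simp]
lemma addLeaf_adj_some_none (ℓ : Fin q) {a : H.V} :
    (H.addLeaf v ℓ).G.Adj (some a) none ↔ a = v := by
  simp [addLeaf, SimpleGraph.fromRel_adj]

lemma mem_addLeaf_S_some (ℓ : Fin q) {u : H.V} : some u ∈ (H.addLeaf v ℓ).S ↔ u ∈ H.S := by
  show some u ∈ insert none (H.S.image some) ↔ _
  simp

lemma none_mem_addLeaf_S (ℓ : Fin q) : none ∈ (H.addLeaf v ℓ).S :=
  mem_insert_self _ _

def addLeafEmbedding (ℓ : Fin q) : H.G ↪g (H.addLeaf v ℓ).G where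
  toEmbedding := .some
  map_rel_iff' := addLeaf_adj_some_some H v ℓ

-- Stated on `Option H.V`, to which `(H.addLeaf v ℓ).V` is only definitionally equal: the `Option`
-- simp lemmas do not fire on the latter, so callers use this lemma by term application.
lemma mem_edgeSet_addLeaf_not_mem_range (ℓ : Fin q) {e : Sym2 (Option H.V)} :
    e ∈ (H.addLeaf v ℓ).G.edgeSet ∧ e ∉ Set.range (Sym2.map some) ↔ e = s(none, some v) := by
  induction e using Sym2.ind with
  | _ a b =>
    show (H.addLeaf v ℓ).G.Adj a b ∧ _ ↔ _
    rw [Sym2.mk_mem_range_map]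
    rcases a with _ | a <;> rcases b with _ | b
    · exact iff_of_false (fun h => (H.addLeaf v ℓ).G.irrefl h.1) (by simp)
    all_goals simp

lemma mono_addLeaf (ℓ : Fin q) (ψ : (H.addLeaf v ℓ).V → Fin q) :
    (H.addLeaf v ℓ).mono ψ = H.mono (fun u => ψ (some u)) +
      if ψ none = ψ (some v) then 1 else 0 := by
  rw [mono_eq_mono_add_card_of_embedding (H.addLeafEmbedding v ℓ)]
  congr 1
  split_ifs with hleaf
  · refine card_eq_one.2 ⟨s(none, some v), ext fun e => ?_⟩
    have hedge := H.mem_edgeSet_addLeaf_not_mem_range v ℓ (e := e)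
    simp only [mem_filter, mem_univ, true_and, mem_singleton]
    constructor
    · exact fun ⟨he, _, hr⟩ => hedge.1 ⟨he, hr⟩
    · rintro rfl
      exact ⟨(hedge.2 rfl).1, Sym2.mk_isDiag_iff.2 hleaf, (hedge.2 rfl).2⟩
  · refine card_eq_zero.2 (filter_eq_empty_iff.2 fun e _ ⟨he, hdiag, hr⟩ => hleaf ?_)
    rw [(H.mem_edgeSet_addLeaf_not_mem_range v ℓ).1 ⟨he, hr⟩] at hdiag
    exact Sym2.mk_isDiag_iff.1 hdiag

lemma Zcr_addLeaf_eq_pow_mul_Zcr (ℓ j : Fin q) (w : ℝ) :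
    (H.addLeaf v ℓ).Zcr (some v) j w = w ^ (if j = ℓ then 1 else 0) * H.Zcr v j w := by
  unfold Zcr
  rw [mul_sum]
  refine sum_nbij' (fun ψ u => ψ (some u)) (fun φ a => a.elim ℓ φ) ?_ ?_ ?_ ?_ ?_
  · intro ψ hψ
    obtain ⟨hadm, hv⟩ := (mem_filter.1 hψ).2
    exact mem_filter.2
      ⟨mem_univ _, fun u hu => hadm (some u) ((H.mem_addLeaf_S_some v ℓ).2 hu), hv⟩
  · intro φ hφ
    obtain ⟨hadm, hv⟩ := (mem_filter.1 hφ).2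
    refine mem_filter.2 ⟨mem_univ _, fun a ha => ?_, hv⟩
    rcases a with _ | u
    · rfl
    · exact hadm u ((H.mem_addLeaf_S_some v ℓ).1 ha)
  · intro ψ hψ
    funext a
    rcases a with _ | u
    · exact ((mem_filter.1 hψ).2.1 none (none_mem_addLeaf_S H v ℓ)).symm
    · rfl
  · intro φ _
    rfl
  · intro ψ hψ
    obtain ⟨hadm, hv⟩ := (mem_filter.1 hψ).2
    have hnone : ψ none = ℓ := hadm none (none_mem_addLeaf_S H v ℓ)
    rw [mono_addLeaf, hnone, hv, pow_add, mul_comm]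
    simp only [eq_comm]

lemma eq_of_adj_of_deg_eq_one {u x y : H.V} (hu : H.deg u = 1) (hx : H.G.Adj u x)
    (hy : H.G.Adj u y) : x = y :=
  card_le_one.1 hu.le x (by simp [nbhd, hx]) y (by simp [nbhd, hy])

def barEmbedding : (H.bar v).G ↪g H.G := SimpleGraph.Embedding.induce _

lemma range_barEmbedding :
    Set.range (H.barEmbedding v) = {u | ¬(u ∈ H.S ∧ H.G.Adj v u)} :=
  Subtype.range_coe

lemma mem_edgeSet_not_mem_range_bar (hleaf : ∀ u ∈ H.S, H.deg u = 1) {e : Sym2 H.V} :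
    e ∈ H.G.edgeSet ∧ e ∉ Set.range (Sym2.map (H.barEmbedding v)) ↔
      ∃ u, (u ∈ H.S ∧ H.G.Adj v u) ∧ s(u, v) = e := by
  induction e using Sym2.ind with
  | _ a b =>
    rw [Sym2.mk_mem_range_map, range_barEmbedding]
    simp only [SimpleGraph.mem_edgeSet, Set.mem_ofPred_eq]
    constructor
    · rintro ⟨hab, hpinned⟩
      by_cases ha : a ∈ H.S ∧ H.G.Adj v a
      · obtain rfl := eq_of_adj_of_deg_eq_one H (hleaf a ha.1) ha.2.symm hab
        exact ⟨a, ha, rfl⟩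
      · have hb : b ∈ H.S ∧ H.G.Adj v b := by tauto
        obtain rfl := eq_of_adj_of_deg_eq_one H (hleaf b hb.1) hb.2.symm hab.symm
        exact ⟨b, hb, Sym2.eq_swap⟩
    · rintro ⟨u, hu, he⟩
      rcases Sym2.eq_iff.1 he with ⟨rfl, rfl⟩ | ⟨rfl, rfl⟩
      · exact ⟨hu.2.symm, fun h => h.1 hu⟩
      · exact ⟨hu.2, fun h => h.2 hu⟩

lemma mono_eq_mono_bar_add (hleaf : ∀ u ∈ H.S, H.deg u = 1) (ψ : H.V → Fin q) :
    H.mono ψ = (H.bar v).mono (fun u => ψ u.1) + #{u ∈ H.nbhd v | u ∈ H.S ∧ ψ u = ψ v} := by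
  rw [mono_eq_mono_add_card_of_embedding (H.barEmbedding v)]
  congr 1
  rw [← card_image_of_injective _ (fun _ _ => Sym2.congr_left.1 : (fun u => s(u, v)).Injective)]
  congr 1
  ext e
  simp only [mem_filter, mem_univ, true_and, mem_image, nbhd]
  constructor
  · rintro ⟨he, hdiag, hr⟩
    obtain ⟨u, hu, rfl⟩ := (H.mem_edgeSet_not_mem_range_bar v hleaf).1 ⟨he, hr⟩
    exact ⟨u, ⟨hu.2, hu.1, Sym2.mk_isDiag_iff.1 hdiag⟩, rfl⟩
  · rintro ⟨u, ⟨hvu, hS, hψ⟩, rfl⟩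
    have hedge := (H.mem_edgeSet_not_mem_range_bar v hleaf).2 ⟨u, ⟨hS, hvu⟩, rfl⟩
    exact ⟨hedge.1, Sym2.mk_isDiag_iff.2 hψ, hedge.2⟩

lemma Zcr_eq_pow_mul_Zcr_bar (hleaf : ∀ u ∈ H.S, H.deg u = 1) (j : Fin q) (w : ℝ) :
    H.Zcr v j w = w ^ H.cvec v j * (H.bar v).Zcr (H.barVert v) j w := by
  unfold Zcr
  rw [mul_sum]
  refine sum_nbij' (fun ψ u => ψ u.1)
    (fun φ u => if h : ¬(u ∈ H.S ∧ H.G.Adj v u) then φ ⟨u, h⟩ else H.pin u) ?_ ?_ ?_ ?_ ?_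
  · intro ψ hψ
    obtain ⟨hadm, hv⟩ := (mem_filter.1 hψ).2
    exact mem_filter.2 ⟨mem_univ _, fun u hu => hadm u.1 (mem_filter.1 hu).2, hv⟩
  · intro φ hφ
    obtain ⟨hadm, hv⟩ := (mem_filter.1 hφ).2
    refine mem_filter.2 ⟨mem_univ _, fun u hu => ?_, ?_⟩
    · dsimp only
      split_ifs with h
      · rfl
      · exact hadm ⟨u, h⟩ (mem_filter.2 ⟨mem_univ _, hu⟩)
    · exact (dif_pos (H.barVert v).2).trans hv
  · intro ψ hψ
    funext u
    split_ifs with h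
    · exact ((mem_filter.1 hψ).2.1 u h.1).symm
    · rfl
  · intro φ _
    funext u
    exact dif_pos u.2
  · intro ψ hψ
    obtain ⟨hadm, hv⟩ := (mem_filter.1 hψ).2
    rw [mono_eq_mono_bar_add H v hleaf, pow_add, mul_comm, cvec, hv]
    congr 3
    exact filter_congr fun u _ => and_congr_right fun hS => by rw [hadm u hS]

lemma Zcr_addLeaf_eq_pow_mul_Zcr_bar (hleaf : ∀ u ∈ H.S, H.deg u = 1) (ℓ j : Fin q) (w : ℝ) :
    (H.addLeaf v ℓ).Zcr (some v) j w =
      w ^ (H.cvec v j + if j = ℓ then 1 else 0) * (H.bar v).Zcr (H.barVert v) j w := by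
  rw [Zcr_addLeaf_eq_pow_mul_Zcr, Zcr_eq_pow_mul_Zcr_bar H v hleaf, pow_add]
  ring

lemma Zr_addLeaf_eq_sum (hleaf : ∀ u ∈ H.S, H.deg u = 1) (ℓ : Fin q) (w : ℝ) :
    (H.addLeaf v ℓ).Zr w =
      ∑ i, w ^ (H.cvec v i + if i = ℓ then 1 else 0) * (H.bar v).Zcr (H.barVert v) i w := by
  rw [Zr_eq_sum_Zcr _ (some v)]
  exact sum_congr rfl fun i _ => H.Zcr_addLeaf_eq_pow_mul_Zcr_bar v hleaf ℓ i w

lemma Pr_addLeaf_eq_div (hleaf : ∀ u ∈ H.S, H.deg u = 1) (ℓ j : Fin q) (w : ℝ) :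
    (H.addLeaf v ℓ).Pr (some v) j w =
      w ^ (H.cvec v j + if j = ℓ then 1 else 0) * (H.bar v).Zcr (H.barVert v) j w /
        ∑ i, w ^ (H.cvec v i + if i = ℓ then 1 else 0) * (H.bar v).Zcr (H.barVert v) i w := by
  unfold Pr
  rw [Zcr_addLeaf_eq_pow_mul_Zcr_bar H v hleaf, Zr_addLeaf_eq_sum H v hleaf]

end PCG

lemma hasDerivAt_log_div {f g : ℝ → ℝ} {f' g' t : ℝ} (hf : HasDerivAt f f' t)
    (hg : HasDerivAt g g' t) (hft : 0 < f t) (hgt : 0 < g t) :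
    HasDerivAt (fun s => Real.log (f s / g s)) (f' / f t - g' / g t) t := by
  refine ((hf.div hg hgt.ne').log (div_pos hft hgt).ne').congr_deriv ?_
  simp only [Pi.div_apply]
  field_simp

section ExpSum

variable {q : ℕ}

def expSum (q : ℕ) (a : Fin q → ℝ) (x : Fin (q - 1) → ℝ) : ℝ :=
  ∑ i, a i * Real.exp (extendLastR q x i)

lemma extendLastR_castLE (x : Fin (q - 1) → ℝ) (j : Fin (q - 1)) :
    extendLastR q x (Fin.castLE (Nat.sub_le q 1) j) = x j := by
  simp [extendLastR]

lemma extendLastR_update (x : Fin (q - 1) → ℝ) (j : Fin (q - 1)) (t : ℝ) (i : Fin q) :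
    extendLastR q (Function.update x j t) i =
      if i = Fin.castLE (Nat.sub_le q 1) j then t else extendLastR q x i := by
  split_ifs with hij
  · rw [hij, extendLastR_castLE, Function.update_self]
  · unfold extendLastR
    split_ifs with hi
    · exact Function.update_of_ne (fun h => hij (Fin.ext (by simp [← h]))) _ _
    · rfl

lemma differentiable_expSum (a : Fin q → ℝ) : Differentiable ℝ (expSum q a) := by
  refine Differentiable.fun_sum fun i _ => (Differentiable.exp ?_).const_mul _
  unfold extendLastR
  split_ifs
  exacts [differentiable_apply _, differentiable_const _]

lemma hasDerivAt_expSum_update (a : Fin q → ℝ) (x : Fin (q - 1) → ℝ) (j : Fin (q - 1)) (t : ℝ) :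
    HasDerivAt (fun t => expSum q a (Function.update x j t))
      (a (Fin.castLE (Nat.sub_le q 1) j) * Real.exp t) t := by
  have hsplit : ∀ t, expSum q a (Function.update x j t) =
      (∑ i ∈ univ.erase (Fin.castLE (Nat.sub_le q 1) j), a i * Real.exp (extendLastR q x i)) +
        a (Fin.castLE (Nat.sub_le q 1) j) * Real.exp t := by
    intro t
    rw [expSum, ← sum_erase_add _ _ (mem_univ (Fin.castLE (Nat.sub_le q 1) j)),
      extendLastR_update, if_pos rfl]
    congr 1
    exact sum_congr rfl fun i hi => by rw [extendLastR_update, if_neg (ne_of_mem_erase hi)]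
  simp only [hsplit]
  exact ((Real.hasDerivAt_exp t).const_mul _).const_add _

variable {Z : Fin q → ℝ} {x : Fin (q - 1) → ℝ}

lemma exp_extendLastR_of_log_ratio (hZ : ∀ i, 0 < Z i) (hlast : q - 1 < q)
    (hx : ∀ j, x j = Real.log (Z (Fin.castLE (Nat.sub_le q 1) j) / Z ⟨q - 1, hlast⟩)) (i : Fin q) :
    Real.exp (extendLastR q x i) = Z i / Z ⟨q - 1, hlast⟩ := by
  unfold extendLastR
  split_ifs with hi
  · rw [hx, Real.exp_log (div_pos (hZ _) (hZ _))]
    rfl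
  · rw [Real.exp_zero, (Fin.ext (by simp only; omega) : i = ⟨q - 1, hlast⟩), div_self (hZ _).ne']

lemma expSum_of_log_ratio (hZ : ∀ i, 0 < Z i) (hlast : q - 1 < q)
    (hx : ∀ j, x j = Real.log (Z (Fin.castLE (Nat.sub_le q 1) j) / Z ⟨q - 1, hlast⟩))
    (a : Fin q → ℝ) :
    expSum q a x = (∑ i, a i * Z i) / Z ⟨q - 1, hlast⟩ := by
  rw [expSum, sum_div]
  exact sum_congr rfl fun i _ => by rw [exp_extendLastR_of_log_ratio hZ hlast hx, mul_div_assoc]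

theorem gradient_log_expSum_div_of_log_ratio (hZ : ∀ i, 0 < Z i) (hlast : q - 1 < q)
    (hx : ∀ j, x j = Real.log (Z (Fin.castLE (Nat.sub_le q 1) j) / Z ⟨q - 1, hlast⟩))
    {a b : Fin q → ℝ} (ha : 0 < ∑ i, a i * Z i)
    (hb : 0 < ∑ i, b i * Z i) :
    DifferentiableAt ℝ (fun x => Real.log (expSum q a x / expSum q b x)) x ∧
    ∀ j : Fin (q - 1),
      deriv (fun t => Real.log (expSum q a (Function.update x j t) /
          expSum q b (Function.update x j t))) (x j) =
        a (Fin.castLE (Nat.sub_le q 1) j) * Z (Fin.castLE (Nat.sub_le q 1) j) / ∑ i, a i * Z i -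
        b (Fin.castLE (Nat.sub_le q 1) j) * Z (Fin.castLE (Nat.sub_le q 1) j) / ∑ i, b i * Z i := by
  have hZlast := hZ ⟨q - 1, hlast⟩
  have hpos : ∀ {c : Fin q → ℝ}, 0 < ∑ i, c i * Z i → 0 < expSum q c x := fun hc => by
    rw [expSum_of_log_ratio hZ hlast hx]
    exact div_pos hc hZlast
  have hquot : DifferentiableAt ℝ (fun x => expSum q a x / expSum q b x) x := by
    simp only [div_eq_mul_inv]
    exact (differentiable_expSum a x).mul ((differentiable_expSum b x).inv (hpos hb).ne')
  refine ⟨hquot.log (div_pos (hpos ha) (hpos hb)).ne', fun j => HasDerivAt.deriv ?_⟩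
  have hupd : Function.update x j (x j) = x := Function.update_eq_self j x
  refine (hasDerivAt_log_div (hasDerivAt_expSum_update a x j (x j))
    (hasDerivAt_expSum_update b x j (x j)) (by rw [hupd]; exact hpos ha)
    (by rw [hupd]; exact hpos hb)).congr_deriv ?_
  rw [hupd, expSum_of_log_ratio hZ hlast hx, expSum_of_log_ratio hZ hlast hx,
    ← extendLastR_castLE x j, exp_extendLastR_of_log_ratio hZ hlast hx]
  field_simp

end ExpSum

/-- The gradient of `F_{w,c}` (viewed as a real function on `ℝ^{q−1}`) at the real
log-ratio vector `R` equals the vector `P_{H,v}(w)` of marginal differences. -/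
theorem gradient_real (Δ q : ℕ) (hq : Δ + 1 < q)
    (H : PCG q) (v : H.V) (hGP : PCG.GoodPair Δ H v)
    (w : ℝ)
    (hZbar : ∀ j : Fin q, 0 < (H.bar v).Zcr (H.barVert v) j w)
    (hZ1 : 0 < (H.addLeaf v ⟨0, by omega⟩).Zr w)
    (hZq : 0 < (H.addLeaf v ⟨q - 1, by omega⟩).Zr w)
    (R : Fin (q - 1) → ℝ)
    (hR : ∀ j : Fin (q - 1), R j =
      Real.log ((H.bar v).Zcr (H.barVert v) (Fin.castLE (Nat.sub_le q 1) j) w /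
        (H.bar v).Zcr (H.barVert v) ⟨q - 1, by omega⟩ w)) :
    DifferentiableAt ℝ (FmapR q (H.cvec v) w) R ∧
    ∀ j : Fin (q - 1),
      deriv (fun t => FmapR q (H.cvec v) w (Function.update R j t)) (R j) =
        H.Pvec v w j := by
  have hleaf := hGP.2.2.1
  rw [H.Zr_addLeaf_eq_sum v hleaf] at hZ1 hZq
  obtain ⟨hdiff, hderiv⟩ := gradient_log_expSum_div_of_log_ratio hZbar (by omega) hR
    (a := fun i => w ^ (H.cvec v i + if (i : ℕ) = 0 then 1 else 0))
    (b := fun i => w ^ (H.cvec v i + if (i : ℕ) = q - 1 then 1 else 0))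
    (by simpa only [Fin.ext_iff] using hZ1) (by simpa only [Fin.ext_iff] using hZq)
  refine ⟨hdiff, fun j => (hderiv j).trans ?_⟩
  simp only [PCG.Pvec, H.Pr_addLeaf_eq_div v hleaf, Fin.ext_iff]
end
end

section
/- Let α > 0 and let Δ, q be positive integers with q ≥ (1+α)Δ + 1. Let (G,v) ∈ 𝒢•_{Δ,q}, let w ∈ [0,1] be such that Z^j_{Ḡ,v}(w) > 0 for every color j, let c = c_{G,v} ∈ ℕ^q, and let R ∈ ℝ^{q−1} be defined by R_j = log(Z^j_{Ḡ,v}(w)/Z^q_{Ḡ,v}(w)). Then (q−Δ)²/(q·e^{1/α}) ≤ P_c(w,R) ≤ q²·e^{1/α}/(q−Δ), the same two-sided bound holds for Q_c(w,R), and consequently (q−Δ)³/(q³·e^{2/α}) ≤ P_c(w,R)/Q_c(w,R) ≤ q³·e^{2/α}/(q−Δ)³. -/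
attribute [local instance 10] Classical.propDecidable

noncomputable section

/-!
Write `Zʲ` for the weight of the colorings of `Ḡ` that give `v` the color `j`, and
`θ = 1 - 1 / (q - Δ)`. Recoloring a free vertex with one of the at least `q - Δ` colors absent
from its neighbourhood creates no monochromatic edge, and distinct recolorings are distinct
colorings; so a free vertex of degree at most `Δ` carries any fixed color in at most a
`1 / (q - Δ)` share of the weight. Forbidding the color `j` on the (free) neighbours of `v` one
at a time thus costs a factor `θ` each, after which `v` may be recolored `j`: `θ ^ deg v · Zᵗ ≤ Zʲ`.
As `θ ^ Δ ≥ e^{-1/α}`, every ratio `e^{R_j} = Zʲ / Z^q` lies between `θ ^ deg v` and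
`q e^{1/α} / (q - Δ)`. In `P_c` and `Q_c` all but at most `k + 1` of the `q` terms, `k` being
the number of pinned neighbours of `v`, have exponent zero; this gives both two-sided bounds, and
dividing them bounds the ratio.
-/

open Finset Function

lemma sum_sum_update_le_sum {α β : Type*} [DecidableEq α] {s t : Finset (α → β)}
    {T : (α → β) → Finset β} {x : α} {a : β} {g : (α → β) → ℝ}
    (hg : ∀ φ ∈ t, 0 ≤ g φ) (hs : ∀ ψ ∈ s, ψ x = a)
    (hmaps : ∀ ψ ∈ s, ∀ b ∈ T ψ, update ψ x b ∈ t) :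
    ∑ ψ ∈ s, ∑ b ∈ T ψ, g (update ψ x b) ≤ ∑ φ ∈ t, g φ := by
  rw [sum_sigma', ← sum_image (g := fun p : (_ : α → β) × β => update p.1 x p.2)]
  · refine sum_le_sum_of_subset_of_nonneg ?_ fun φ hφ _ => hg φ hφ
    intro φ hφ
    obtain ⟨⟨ψ, b⟩, hp, rfl⟩ := mem_image.1 hφ
    exact hmaps ψ (mem_sigma.1 hp).1 b (mem_sigma.1 hp).2
  · rintro ⟨ψ, b⟩ hp ⟨ψ', b'⟩ hp' heq
    have hψ : ψ = ψ' := by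
      funext u
      by_cases hu : u = x
      · rw [hu, hs ψ (mem_sigma.1 hp).1, hs ψ' (mem_sigma.1 hp').1]
      · simpa [update_of_ne hu] using congrFun heq u
    have hb : b = b' := by simpa using congrFun heq x
    simp [hψ, hb]

lemma sum_pow_mul_le_card_mul {ι : Type*} [Fintype ι] (e : ι → ℕ) {w U : ℝ} {r : ι → ℝ}
    (hw0 : 0 ≤ w) (hw1 : w ≤ 1) (hr0 : ∀ i, 0 ≤ r i) (hrU : ∀ i, r i ≤ U) :
    ∑ i, w ^ e i * r i ≤ Fintype.card ι * U := by
  rw [← nsmul_eq_mul, ← card_univ]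
  exact sum_le_card_nsmul _ _ _ fun i _ =>
    (mul_le_of_le_one_left (hr0 i) (pow_le_one₀ hw0 hw1)).trans (hrU i)

lemma card_sub_sum_mul_le_sum_pow_mul {ι : Type*} [Fintype ι] (e : ι → ℕ) {w L : ℝ}
    {r : ι → ℝ} (hw : 0 ≤ w) (hL : 0 ≤ L) (hr : ∀ i, L ≤ r i) :
    ((Fintype.card ι : ℝ) - ∑ i, (e i : ℝ)) * L ≤ ∑ i, w ^ e i * r i := by
  -- termwise `(1 - e i) * L ≤ w ^ e i * r i`: the left side is `≤ 0` unless `e i = 0`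
  have hterm : ∀ i, (1 - (e i : ℝ)) * L ≤ w ^ e i * r i := by
    intro i
    rcases Nat.eq_zero_or_pos (e i) with h | h
    · simpa [h] using hr i
    · have : (1 : ℝ) ≤ e i := by exact_mod_cast h
      nlinarith [mul_nonneg (pow_nonneg hw (e i)) (hL.trans (hr i))]
  calc ((Fintype.card ι : ℝ) - ∑ i, (e i : ℝ)) * L = ∑ i, (1 - (e i : ℝ)) * L := by
        rw [← sum_mul, sum_sub_distrib, sum_const, card_univ, nsmul_one]
  _ ≤ _ := sum_le_sum fun i _ => hterm i

lemma div_mem_Icc_div_of_mem_Icc {a b x y : ℝ} (ha : 0 < a) (hx : x ∈ Set.Icc a b)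
    (hy : y ∈ Set.Icc a b) : x / y ∈ Set.Icc (a / b) (b / a) :=
  ⟨div_le_div₀ (ha.le.trans hx.1) hx.1 (ha.trans_le hy.1) hy.2,
    div_le_div₀ (ha.le.trans (hx.1.trans hx.2)) hx.2 ha hy.1⟩

lemma one_sub_one_div_mem_Icc {m : ℝ} (hm : 1 ≤ m) : 1 - 1 / m ∈ Set.Icc (0 : ℝ) 1 :=
  ⟨by rw [sub_nonneg, div_le_one (by linarith)]; exact hm,
    sub_le_self _ (one_div_nonneg.2 (by linarith))⟩

lemma one_le_one_sub_inv_pow_mul_exp {α m : ℝ} {Δ : ℕ} (hα : 0 < α) (hm1 : 1 < m)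
    (hm : 1 + α * Δ ≤ m) : 1 ≤ (1 - 1 / m) ^ Δ * Real.exp (1 / α) := by
  have hm0 : 0 < m - 1 := by linarith
  have hbase : m / (m - 1) ≤ Real.exp (1 / (m - 1)) := by
    rw [show m / (m - 1) = 1 / (m - 1) + 1 by field_simp; ring]
    exact Real.add_one_le_exp _
  have hpow : (m / (m - 1)) ^ Δ ≤ Real.exp (1 / α) := by
    calc (m / (m - 1)) ^ Δ ≤ Real.exp (1 / (m - 1)) ^ Δ := by gcongr
    _ = Real.exp (Δ / (m - 1)) := by rw [← Real.exp_nat_mul]; ring_nf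
    _ ≤ Real.exp (1 / α) := by
        rw [Real.exp_le_exp, div_le_div_iff₀ hm0 hα]; linarith
  calc (1 : ℝ) = (1 - 1 / m) ^ Δ * (m / (m - 1)) ^ Δ := by
        rw [← mul_pow, show (1 - 1 / m) * (m / (m - 1)) = 1 by field_simp, one_pow]
  _ ≤ _ := by
      have := (one_sub_one_div_mem_Icc hm1.le).1
      gcongr

namespace PCG

variable {q : ℕ} {K : PCG q} {w : ℝ}

def admissibleWith (K : PCG q) (p : (K.V → Fin q) → Prop) : Finset (K.V → Fin q) :=
  {ψ | K.admissible ψ ∧ p ψ}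

lemma mem_admissibleWith {p : (K.V → Fin q) → Prop} {ψ : K.V → Fin q} :
    ψ ∈ K.admissibleWith p ↔ K.admissible ψ ∧ p ψ := by
  simp [admissibleWith]

def weight (K : PCG q) (w : ℝ) (p : (K.V → Fin q) → Prop) : ℝ :=
  ∑ ψ ∈ K.admissibleWith p, w ^ K.mono ψ

lemma weight_congr {p p' : (K.V → Fin q) → Prop} (h : ∀ ψ, p ψ ↔ p' ψ) :
    K.weight w p = K.weight w p' := by
  rw [show p = p' from funext fun ψ => propext (h ψ)]

lemma weight_nonneg (hw : 0 ≤ w) (p : (K.V → Fin q) → Prop) : 0 ≤ K.weight w p :=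
  sum_nonneg fun _ _ => pow_nonneg hw _

lemma weight_and_not (p r : (K.V → Fin q) → Prop) :
    K.weight w (fun ψ => p ψ ∧ ¬ r ψ) = K.weight w p - K.weight w (fun ψ => p ψ ∧ r ψ) := by
  have hsplit := sum_filter_add_sum_filter_not (K.admissibleWith p) r (fun ψ => w ^ K.mono ψ)
  simp only [admissibleWith, filter_filter, and_assoc] at hsplit
  simp only [weight, admissibleWith]
  linarith

lemma Zcr_eq_weight (x : K.V) (j : Fin q) : K.Zcr x j w = K.weight w (· x = j) :=
  sum_congr (by ext; simp [admissibleWith]) fun _ _ => rfl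

lemma Zcr_nonneg (hw : 0 ≤ w) (x : K.V) (j : Fin q) : 0 ≤ K.Zcr x j w := by
  rw [Zcr_eq_weight]
  exact weight_nonneg hw _

lemma Zr_eq_weight : K.Zr w = K.weight w fun _ => True :=
  sum_congr (by ext; simp [admissibleWith]) fun _ _ => rfl

lemma Zr_eq_sum_Zcr_s6 (x : K.V) : K.Zr w = ∑ j : Fin q, K.Zcr x j w := by
  rw [Zr, ← sum_fiberwise_of_maps_to (g := fun ψ : K.V → Fin q => ψ x) (t := univ)
    (fun ψ _ => mem_univ _) (fun ψ => w ^ K.mono ψ)]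
  refine sum_congr rfl fun j _ => ?_
  rw [Zcr, filter_filter]

lemma mem_nbhd {x u : K.V} : u ∈ K.nbhd x ↔ K.G.Adj x u := by
  simp [nbhd]

lemma admissible_update {ψ : K.V → Fin q} (h : K.admissible ψ) {x : K.V} (hx : x ∉ K.S)
    (a : Fin q) : K.admissible (update ψ x a) := by
  intro u hu
  rw [update_of_ne (by rintro rfl; exact hx hu)]
  exact h u hu

lemma mono_update_le {ψ : K.V → Fin q} {x : K.V} {a : Fin q} (h : ∀ u ∈ K.nbhd x, ψ u ≠ a) :
    K.mono (update ψ x a) ≤ K.mono ψ := by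
  apply card_le_card
  intro e
  induction e using Sym2.ind with
  | _ u v =>
    simp only [mem_filter, mem_univ, true_and, Sym2.map_mk, Sym2.mk_isDiag_iff,
      SimpleGraph.mem_edgeSet]
    rintro ⟨hadj, hdiag⟩
    refine ⟨hadj, ?_⟩
    rw [update_apply, update_apply] at hdiag
    split_ifs at hdiag with h1 h2 h2
    · exact (K.G.irrefl (by rwa [h1, h2] at hadj)).elim
    · exact absurd hdiag.symm (h v (mem_nbhd.2 (by rwa [h1] at hadj)))
    · exact absurd hdiag (h u (mem_nbhd.2 (by rw [h2] at hadj; exact hadj.symm)))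
    · exact hdiag

lemma sub_deg_le_card_avoided (x : K.V) (ψ : K.V → Fin q) :
    (q : ℝ) - K.deg x ≤ #{t | ∀ u ∈ K.nbhd x, ψ u ≠ t} := by
  have hused : #{t | ¬ ∀ u ∈ K.nbhd x, ψ u ≠ t} ≤ K.deg x :=
    calc #{t | ¬ ∀ u ∈ K.nbhd x, ψ u ≠ t} ≤ #((K.nbhd x).image ψ) :=
          card_le_card fun t ht => by simpa using ht
    _ ≤ K.deg x := card_image_le
  have hsplit : #{t | ∀ u ∈ K.nbhd x, ψ u ≠ t} + #{t | ¬ ∀ u ∈ K.nbhd x, ψ u ≠ t} = q := by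
    rw [card_filter_add_card_filter_not, card_univ, Fintype.card_fin]
  have h : (q : ℝ) ≤ ((#{t | ∀ u ∈ K.nbhd x, ψ u ≠ t} + K.deg x : ℕ) : ℝ) :=
    Nat.cast_le.2 (by omega)
  rw [Nat.cast_add] at h
  linarith

lemma sub_deg_mul_weight_le (hw0 : 0 ≤ w) (hw1 : w ≤ 1) {x : K.V} (hx : x ∉ K.S)
    {E : (K.V → Fin q) → Prop} (hE : ∀ ψ a, E ψ → E (update ψ x a)) (j : Fin q) :
    ((q : ℝ) - K.deg x) * K.weight w (fun ψ => E ψ ∧ ψ x = j) ≤ K.weight w E := by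
  let T (ψ : K.V → Fin q) : Finset (Fin q) := {t | ∀ u ∈ K.nbhd x, ψ u ≠ t}
  calc ((q : ℝ) - K.deg x) * K.weight w (fun ψ => E ψ ∧ ψ x = j)
      ≤ ∑ ψ ∈ K.admissibleWith (fun ψ => E ψ ∧ ψ x = j), ∑ _t ∈ T ψ, w ^ K.mono ψ := by
        rw [weight, mul_sum]
        refine sum_le_sum fun ψ _ => ?_
        rw [sum_const, nsmul_eq_mul]
        exact mul_le_mul_of_nonneg_right (sub_deg_le_card_avoided x ψ) (pow_nonneg hw0 _)
    _ ≤ ∑ ψ ∈ K.admissibleWith (fun ψ => E ψ ∧ ψ x = j), ∑ t ∈ T ψ, w ^ K.mono (update ψ x t) := by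
        refine sum_le_sum fun ψ _ => sum_le_sum fun t ht => ?_
        exact pow_le_pow_of_le_one hw0 hw1 (mono_update_le (mem_filter.1 ht).2)
    _ ≤ K.weight w E := by
        unfold weight
        refine sum_sum_update_le_sum (fun _ _ => pow_nonneg hw0 _)
          (fun ψ hψ => (mem_admissibleWith.1 hψ).2.2) fun ψ hψ t _ => ?_
        obtain ⟨hadm, hEψ, -⟩ := mem_admissibleWith.1 hψ
        exact mem_admissibleWith.2 ⟨admissible_update hadm hx t, hE ψ t hEψ⟩

lemma weight_avoiding_le_Zcr (hw0 : 0 ≤ w) (hw1 : w ≤ 1) {x : K.V} (hx : x ∉ K.S)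
    (t j : Fin q) :
    K.weight w (fun ψ => ψ x = t ∧ ∀ u ∈ K.nbhd x, ψ u ≠ j) ≤ K.Zcr x j w := by
  rw [Zcr_eq_weight]
  calc K.weight w (fun ψ => ψ x = t ∧ ∀ u ∈ K.nbhd x, ψ u ≠ j)
      ≤ ∑ ψ ∈ K.admissibleWith (fun ψ => ψ x = t ∧ ∀ u ∈ K.nbhd x, ψ u ≠ j),
          ∑ b ∈ {j}, w ^ K.mono (update ψ x b) := by
        rw [weight]
        refine sum_le_sum fun ψ hψ => ?_
        rw [sum_singleton]
        exact pow_le_pow_of_le_one hw0 hw1 (mono_update_le (mem_admissibleWith.1 hψ).2.2)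
    _ ≤ _ := by
        unfold weight
        refine sum_sum_update_le_sum (fun _ _ => pow_nonneg hw0 _)
          (fun ψ hψ => (mem_admissibleWith.1 hψ).2.1) fun ψ hψ b hb => ?_
        rw [mem_singleton.1 hb]
        exact mem_admissibleWith.2 ⟨admissible_update (mem_admissibleWith.1 hψ).1 hx j,
          update_self x j ψ⟩

lemma pow_card_mul_Zcr_le_weight_avoiding (hw0 : 0 ≤ w) (hw1 : w ≤ 1) {Δ : ℕ} (hΔq : Δ < q)
    (hdeg : K.maxDegLE Δ) {x : K.V} (hnb : ∀ u ∈ K.nbhd x, u ∉ K.S) (t j : Fin q)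
    {N : Finset K.V} (hN : N ⊆ K.nbhd x) :
    (1 - 1 / ((q : ℝ) - Δ)) ^ #N * K.Zcr x t w ≤
      K.weight w (fun ψ => ψ x = t ∧ ∀ u ∈ N, ψ u ≠ j) := by
  have hm : (1 : ℝ) ≤ q - Δ := by
    have : (Δ : ℝ) + 1 ≤ q := by exact_mod_cast hΔq
    linarith
  induction N using Finset.induction_on with
  | empty => simp [Zcr_eq_weight]
  | insert a N ha ih =>
    have haX : a ∈ K.nbhd x := hN (mem_insert_self a N)
    set W := K.weight w (fun ψ => ψ x = t ∧ ∀ u ∈ N, ψ u ≠ j)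
    set Wa := K.weight w (fun ψ => (ψ x = t ∧ ∀ u ∈ N, ψ u ≠ j) ∧ ψ a = j)
    have hWa : ((q : ℝ) - Δ) * Wa ≤ W := by
      refine le_trans ?_ (sub_deg_mul_weight_le hw0 hw1 (hnb a haX) ?_ j)
      · have : (K.deg a : ℝ) ≤ Δ := by exact_mod_cast hdeg a
        exact mul_le_mul_of_nonneg_right (by linarith) (weight_nonneg hw0 _)
      · rintro ψ b ⟨hxt, hNj⟩
        refine ⟨by rwa [update_of_ne (mem_nbhd.1 haX).ne], fun u hu => ?_⟩
        rw [update_of_ne (ne_of_mem_of_not_mem hu ha)]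
        exact hNj u hu
    have hsplit : K.weight w (fun ψ => ψ x = t ∧ ∀ u ∈ insert a N, ψ u ≠ j) = W - Wa := by
      rw [← weight_and_not]
      exact weight_congr fun ψ => by simp only [forall_mem_insert]; tauto
    have hθ := (one_sub_one_div_mem_Icc hm).1
    rw [card_insert_of_notMem ha, pow_succ', mul_assoc, hsplit]
    calc (1 - 1 / ((q : ℝ) - Δ)) * ((1 - 1 / ((q : ℝ) - Δ)) ^ #N * K.Zcr x t w)
        ≤ (1 - 1 / ((q : ℝ) - Δ)) * W := mul_le_mul_of_nonneg_left (ih fun u hu =>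
          hN (mem_insert_of_mem hu)) hθ
    _ = W - W / ((q : ℝ) - Δ) := by ring
    _ ≤ W - Wa := by
        have := (le_div_iff₀' (by linarith)).2 hWa
        linarith

lemma pow_deg_mul_Zcr_le_Zcr (hw0 : 0 ≤ w) (hw1 : w ≤ 1) {Δ : ℕ} (hΔq : Δ < q)
    (hdeg : K.maxDegLE Δ) {x : K.V} (hx : x ∉ K.S) (hnb : ∀ u ∈ K.nbhd x, u ∉ K.S)
    (t j : Fin q) :
    (1 - 1 / ((q : ℝ) - Δ)) ^ K.deg x * K.Zcr x t w ≤ K.Zcr x j w :=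
  (pow_card_mul_Zcr_le_weight_avoiding hw0 hw1 hΔq hdeg hnb t j Subset.rfl).trans
    (weight_avoiding_le_Zcr hw0 hw1 hx t j)

lemma sub_deg_mul_Zcr_le_Zr (hw0 : 0 ≤ w) (hw1 : w ≤ 1) {x : K.V} (hx : x ∉ K.S)
    (j : Fin q) : ((q : ℝ) - K.deg x) * K.Zcr x j w ≤ K.Zr w := by
  have h := sub_deg_mul_weight_le hw0 hw1 hx (E := fun _ => True) (fun _ _ _ => trivial) j
  rwa [weight_congr fun ψ => ⟨And.right, And.intro trivial⟩, ← Zcr_eq_weight, ← Zr_eq_weight] at h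

lemma sub_mul_Zcr_le_mul_Zcr (hw0 : 0 ≤ w) (hw1 : w ≤ 1) {Δ : ℕ} (hΔq : Δ < q)
    (hdeg : K.maxDegLE Δ) {x : K.V} (hx : x ∉ K.S) (hnb : ∀ u ∈ K.nbhd x, u ∉ K.S)
    {E : ℝ} (hE : 1 ≤ (1 - 1 / ((q : ℝ) - Δ)) ^ Δ * E) (i j : Fin q) :
    ((q : ℝ) - Δ) * K.Zcr x i w ≤ q * E * K.Zcr x j w := by
  have hm : (1 : ℝ) ≤ q - Δ := by
    have : (Δ : ℝ) + 1 ≤ q := by exact_mod_cast hΔq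
    linarith
  obtain ⟨hθ0, hθ1⟩ := one_sub_one_div_mem_Icc hm
  have hE0 : 0 ≤ E := by
    by_contra! h
    nlinarith [pow_nonneg hθ0 Δ]
  have hZ : ∀ t, K.Zcr x t w ≤ E * K.Zcr x j w := by
    intro t
    have hZt := Zcr_nonneg hw0 x t
    calc K.Zcr x t w ≤ ((1 - 1 / ((q : ℝ) - Δ)) ^ Δ * E) * K.Zcr x t w :=
          le_mul_of_one_le_left hZt hE
    _ ≤ E * ((1 - 1 / ((q : ℝ) - Δ)) ^ K.deg x * K.Zcr x t w) := by
        rw [mul_comm _ E, mul_assoc]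
        exact mul_le_mul_of_nonneg_left (mul_le_mul_of_nonneg_right
          (pow_le_pow_of_le_one hθ0 hθ1 (hdeg x)) hZt) hE0
    _ ≤ E * K.Zcr x j w := by
        gcongr
        exact pow_deg_mul_Zcr_le_Zcr hw0 hw1 hΔq hdeg hx hnb t j
  calc ((q : ℝ) - Δ) * K.Zcr x i w ≤ ((q : ℝ) - K.deg x) * K.Zcr x i w := by
        have : (K.deg x : ℝ) ≤ Δ := by exact_mod_cast hdeg x
        gcongr
        exact Zcr_nonneg hw0 x i
  _ ≤ K.Zr w := sub_deg_mul_Zcr_le_Zr hw0 hw1 hx i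
  _ = ∑ t : Fin q, K.Zcr x t w := Zr_eq_sum_Zcr_s6 x
  _ ≤ ∑ _t : Fin q, E * K.Zcr x j w := sum_le_sum fun t _ => hZ t
  _ = q * E * K.Zcr x j w := by simp [mul_assoc]

lemma Zcr_div_Zcr_mem_Icc (hw0 : 0 ≤ w) (hw1 : w ≤ 1) {Δ : ℕ} (hΔq : Δ < q)
    (hdeg : K.maxDegLE Δ) {x : K.V} (hx : x ∉ K.S) (hnb : ∀ u ∈ K.nbhd x, u ∉ K.S)
    {E : ℝ} (hE : 1 ≤ (1 - 1 / ((q : ℝ) - Δ)) ^ Δ * E) {j : Fin q} (hj : 0 < K.Zcr x j w)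
    (i : Fin q) :
    K.Zcr x i w / K.Zcr x j w ∈ Set.Icc ((1 - 1 / ((q : ℝ) - Δ)) ^ K.deg x) (q * E / (q - Δ)) := by
  have hΔqR : (Δ : ℝ) < q := by exact_mod_cast hΔq
  refine ⟨(le_div_iff₀ hj).2 (pow_deg_mul_Zcr_le_Zcr hw0 hw1 hΔq hdeg hx hnb j i), ?_⟩
  rw [div_le_div_iff₀ hj (by linarith), mul_comm]
  exact sub_mul_Zcr_le_mul_Zcr hw0 hw1 hΔq hdeg hx hnb hE i j

lemma mem_bar_S {H : PCG q} {v : H.V} {u : (H.bar v).V} : u ∈ (H.bar v).S ↔ u.1 ∈ H.S := by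
  show u ∈ univ.filter (fun u : (H.bar v).V => u.1 ∈ H.S) ↔ _
  exact mem_filter.trans (and_iff_right (mem_univ _))

lemma barVert_notMem_S {H : PCG q} {v : H.V} (hv : v ∉ H.S) : H.barVert v ∉ (H.bar v).S :=
  fun h => hv (mem_bar_S.1 h)

lemma bar_adj {H : PCG q} {v : H.V} {a b : (H.bar v).V} :
    (H.bar v).G.Adj a b ↔ H.G.Adj a.1 b.1 := Iff.rfl

lemma maxDegLE_bar {H : PCG q} {Δ : ℕ} (hd : H.maxDegLE Δ) (v : H.V) :
    (H.bar v).maxDegLE Δ := by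
  intro u
  refine le_trans (card_le_card_of_injOn Subtype.val (fun a ha => ?_)
    Subtype.val_injective.injOn) (hd u.1)
  exact mem_coe.2 (mem_nbhd.2 (bar_adj.1 (mem_nbhd.1 (mem_coe.1 ha))))

lemma notMem_S_of_mem_nbhd_barVert {H : PCG q} {v : H.V} :
    ∀ u ∈ (H.bar v).nbhd (H.barVert v), u ∉ (H.bar v).S := by
  intro u hu hS
  exact u.2 ⟨mem_bar_S.1 hS, bar_adj.1 (mem_nbhd.1 hu)⟩

lemma deg_barVert_add_sum_cvec (H : PCG q) (v : H.V) :
    (H.bar v).deg (H.barVert v) + ∑ j : Fin q, H.cvec v j = H.deg v := by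
  have hpinned : ∑ j : Fin q, H.cvec v j = #{u ∈ H.nbhd v | u ∈ H.S} := by
    rw [card_eq_sum_card_fiberwise (f := H.pin) (t := univ) fun u _ => mem_univ _]
    exact sum_congr rfl fun j _ => by rw [cvec, filter_filter]
  have hfree : (H.bar v).deg (H.barVert v) = #{u ∈ H.nbhd v | u ∉ H.S} := by
    refine card_bij (fun u _ => u.1) (fun a ha => ?_) (fun a _ b _ h => Subtype.ext h)
      fun b hb => ?_
    · have ha' : H.G.Adj v a.1 := bar_adj.1 (mem_nbhd.1 ha)
      exact mem_filter.2 ⟨mem_nbhd.2 ha', fun hS => a.2 ⟨hS, ha'⟩⟩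
    · rw [mem_filter, mem_nbhd] at hb
      exact ⟨⟨b, fun h => hb.2 h.1⟩, mem_nbhd.2 (bar_adj.2 hb.1), rfl⟩
  rw [hpinned, hfree, add_comm, card_filter_add_card_filter_not, deg]

end PCG

lemma sum_ite_val_eq_le_one {q : ℕ} (i : ℕ) :
    ∑ j : Fin q, (if (j : ℕ) = i then 1 else 0) ≤ 1 := by
  rw [sum_boole, Nat.cast_id]
  exact card_le_one.2 fun a ha b hb => Fin.ext (by simp only [mem_filter] at ha hb; omega)

lemma sq_div_le_sub_mul_pow {q Δ d k : ℕ} {α : ℝ} (hα : 0 < α) (hΔ : 0 < Δ)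
    (hqΔ : (1 + α) * Δ + 1 ≤ (q : ℝ)) (hdk : d + k ≤ Δ) :
    ((q : ℝ) - Δ) ^ 2 / (q * Real.exp (1 / α)) ≤ (q - (k + 1)) * (1 - 1 / ((q : ℝ) - Δ)) ^ d := by
  set θ := 1 - 1 / ((q : ℝ) - Δ)
  have hΔ1 : (1 : ℝ) ≤ Δ := by exact_mod_cast hΔ
  have hm1 : 1 < (q : ℝ) - Δ := by nlinarith
  have hE := one_le_one_sub_inv_pow_mul_exp (Δ := Δ) hα hm1 (by linarith)
  obtain ⟨hθ0, hθ1⟩ := one_sub_one_div_mem_Icc hm1.le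
  have hcount : ((q : ℝ) - Δ) * θ ^ Δ ≤ (q - (k + 1)) * θ ^ d := by
    rcases Nat.lt_or_ge k Δ with hk | hk
    · have : (k : ℝ) + 1 ≤ Δ := by exact_mod_cast hk
      exact mul_le_mul (by linarith) (pow_le_pow_of_le_one hθ0 hθ1 (by omega))
        (pow_nonneg hθ0 _) (by linarith)
    · have hk' : (k : ℝ) = Δ := by exact_mod_cast (by omega : k = Δ)
      have hθm : ((q : ℝ) - Δ) * θ = q - (k + 1) := by
        simp only [θ, hk']
        field_simp
        ring
      rw [show d = 0 by omega, pow_zero, mul_one, ← hθm]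
      exact mul_le_mul_of_nonneg_left (pow_le_of_le_one hθ0 hθ1 (by omega)) (by linarith)
  calc ((q : ℝ) - Δ) ^ 2 / (q * Real.exp (1 / α)) ≤ ((q : ℝ) - Δ) / Real.exp (1 / α) := by
        rw [div_le_div_iff₀ (mul_pos (by linarith) (Real.exp_pos _)) (Real.exp_pos _)]
        have : 0 ≤ ((q : ℝ) - Δ) * Real.exp (1 / α) := by positivity
        nlinarith
  _ ≤ ((q : ℝ) - Δ) * θ ^ Δ := by
        rw [div_le_iff₀ (Real.exp_pos _)]
        nlinarith
  _ ≤ (q - (k + 1)) * θ ^ d := hcount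

lemma sum_pow_mul_mem_Icc {q Δ d : ℕ} {α w : ℝ} (hα : 0 < α) (hΔ : 0 < Δ)
    (hqΔ : (1 + α) * Δ + 1 ≤ (q : ℝ)) (hw0 : 0 ≤ w) (hw1 : w ≤ 1) (c : Fin q → ℕ) (i : ℕ)
    (hd : d + ∑ j, c j ≤ Δ) {r : Fin q → ℝ}
    (hlo : ∀ j, (1 - 1 / ((q : ℝ) - Δ)) ^ d ≤ r j)
    (hup : ∀ j, r j ≤ q * Real.exp (1 / α) / (q - Δ)) :
    ∑ j, w ^ (c j + if (j : ℕ) = i then 1 else 0) * r j ∈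
      Set.Icc (((q : ℝ) - Δ) ^ 2 / (q * Real.exp (1 / α)))
        ((q : ℝ) ^ 2 * Real.exp (1 / α) / (q - Δ)) := by
  have hm : (1 : ℝ) ≤ q - Δ := by
    have : (0 : ℝ) ≤ α * Δ := by positivity
    linarith
  have hθd := pow_nonneg (one_sub_one_div_mem_Icc hm).1 d
  have hexps : (∑ j, ((c j + if (j : ℕ) = i then 1 else 0 : ℕ) : ℝ)) ≤ ∑ j, c j + 1 := by
    have := sum_ite_val_eq_le_one (q := q) i
    rw [← Nat.cast_sum, sum_add_distrib]
    exact_mod_cast (by omega)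
  constructor
  · calc ((q : ℝ) - Δ) ^ 2 / (q * Real.exp (1 / α))
        ≤ (q - (∑ j, c j + 1)) * (1 - 1 / ((q : ℝ) - Δ)) ^ d := by
          exact_mod_cast sq_div_le_sub_mul_pow hα hΔ hqΔ hd
    _ ≤ (q - ∑ j, ((c j + if (j : ℕ) = i then 1 else 0 : ℕ) : ℝ)) *
          (1 - 1 / ((q : ℝ) - Δ)) ^ d := by
          gcongr
    _ ≤ _ := by
          have := card_sub_sum_mul_le_sum_pow_mul
            (fun j : Fin q => c j + if (j : ℕ) = i then 1 else 0) hw0 hθd hlo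
          rwa [Fintype.card_fin] at this
  · calc _ ≤ (q : ℝ) * (q * Real.exp (1 / α) / (q - Δ)) := by
          simpa using sum_pow_mul_le_card_mul _ hw0 hw1 (fun j => hθd.trans (hlo j)) hup
    _ = _ := by ring

lemma exp_extendLastR {q : ℕ} (hq : 0 < q) {f : Fin q → ℝ} (hf : ∀ j, 0 < f j)
    {R : Fin (q - 1) → ℝ}
    (hR : ∀ j, R j =
      Real.log (f (Fin.castLE (Nat.sub_le q 1) j) / f ⟨q - 1, Nat.sub_lt hq one_pos⟩))
    (j : Fin q) : Real.exp (extendLastR q R j) = f j / f ⟨q - 1, Nat.sub_lt hq one_pos⟩ := by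
  by_cases hj : (j : ℕ) < q - 1
  · rw [extendLastR, dif_pos hj, hR, Real.exp_log (div_pos (hf _) (hf _))]
    rfl
  · obtain rfl : j = ⟨q - 1, Nat.sub_lt hq one_pos⟩ := Fin.ext (show (j : ℕ) = q - 1 by omega)
    rw [extendLastR, dif_neg hj, Real.exp_zero, div_self (hf _).ne']

/-- Bounds on `P_c(w,R)` and `Q_c(w,R)` and their ratio (Lemma 4.1). -/
theorem ratio_bounds (α : ℝ) (hα : 0 < α) (Δ q : ℕ) (hΔ : 0 < Δ) (hq : 0 < q)
    (hqΔ : (1 + α) * (Δ : ℝ) + 1 ≤ (q : ℝ))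
    (H : PCG q) (v : H.V) (hGP : PCG.GoodPair Δ H v)
    (w : ℝ) (hw : w ∈ Set.Icc (0 : ℝ) 1)
    (hZbar : ∀ j : Fin q, 0 < (H.bar v).Zcr (H.barVert v) j w)
    (R : Fin (q - 1) → ℝ)
    (hR : ∀ j : Fin (q - 1), R j =
      Real.log ((H.bar v).Zcr (H.barVert v) (Fin.castLE (Nat.sub_le q 1) j) w /
        (H.bar v).Zcr (H.barVert v) ⟨q - 1, Nat.sub_lt hq one_pos⟩ w)) :
    (((q : ℝ) - Δ) ^ 2 / ((q : ℝ) * Real.exp (1 / α)) ≤ PpolyR q (H.cvec v) w R ∧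
      PpolyR q (H.cvec v) w R ≤ (q : ℝ) ^ 2 * Real.exp (1 / α) / ((q : ℝ) - Δ)) ∧
    (((q : ℝ) - Δ) ^ 2 / ((q : ℝ) * Real.exp (1 / α)) ≤ QpolyR q (H.cvec v) w R ∧
      QpolyR q (H.cvec v) w R ≤ (q : ℝ) ^ 2 * Real.exp (1 / α) / ((q : ℝ) - Δ)) ∧
    (((q : ℝ) - Δ) ^ 3 / ((q : ℝ) ^ 3 * Real.exp (2 / α)) ≤
        PpolyR q (H.cvec v) w R / QpolyR q (H.cvec v) w R ∧
      PpolyR q (H.cvec v) w R / QpolyR q (H.cvec v) w R ≤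
        (q : ℝ) ^ 3 * Real.exp (2 / α) / ((q : ℝ) - Δ) ^ 3) := by
  obtain ⟨hw0, hw1⟩ := hw
  obtain ⟨-, hmax, -, -, hvS⟩ := hGP
  set K := H.bar v
  set x := H.barVert v
  set last : Fin q := ⟨q - 1, Nat.sub_lt hq one_pos⟩
  have hΔ1 : (1 : ℝ) ≤ Δ := by exact_mod_cast hΔ
  have hΔqR : (Δ : ℝ) < q := by nlinarith
  have hΔq : Δ < q := by exact_mod_cast hΔqR
  have hE := one_le_one_sub_inv_pow_mul_exp (m := (q : ℝ) - Δ) (Δ := Δ) hα (by nlinarith)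
    (by linarith)
  have hd : K.deg x + ∑ j, H.cvec v j ≤ Δ := (PCG.deg_barVert_add_sum_cvec H v).trans_le (hmax v)
  have hratio := PCG.Zcr_div_Zcr_mem_Icc hw0 hw1 hΔq (PCG.maxDegLE_bar hmax v)
    (PCG.barVert_notMem_S hvS) PCG.notMem_S_of_mem_nbhd_barVert hE (hZbar last)
  have hlo := fun j => (hratio j).1
  have hup := fun j => (hratio j).2
  have hP := sum_pow_mul_mem_Icc hα hΔ hqΔ hw0 hw1 (H.cvec v) 0 hd hlo hup
  have hQ := sum_pow_mul_mem_Icc hα hΔ hqΔ hw0 hw1 (H.cvec v) (q - 1) hd hlo hup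
  have hr : ∀ j, Real.exp (extendLastR q R j) = K.Zcr x j w / K.Zcr x last w :=
    exp_extendLastR hq hZbar hR
  simp only [PpolyR, QpolyR, hr]
  obtain ⟨hlow, hhigh⟩ := div_mem_Icc_div_of_mem_Icc
    (div_pos (pow_pos (sub_pos.2 hΔqR) 2) (mul_pos (by linarith) (Real.exp_pos _))) hP hQ
  have hexp2 : Real.exp (2 / α) = Real.exp (1 / α) * Real.exp (1 / α) := by
    rw [← Real.exp_add]
    ring_nf
  refine ⟨hP, hQ, le_of_eq_of_le ?_ hlow, hhigh.trans_eq ?_⟩ <;>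
    · rw [hexp2]
      field_simp
end
end

section
/- Let u₁, …, u_k be nonzero vectors in ℝ² such that the angle between any two vectors u_i and u_j is at most φ, for some φ ∈ [0, 2π/3). Then |Σ_{j=1}^{k} u_j| ≥ cos(φ/2)·Σ_{j=1}^{k} |u_j|. -/
/-!
Let `a, b` be two of the vectors at maximal angle `θ ≤ φ`. Since `3θ < 2π`, every other
vector `c` of the family lies in the sector between `a` and `b`, i.e. `∠(a, c) + ∠(c, b) = θ`.
Against the bisector `e = a/|a| + b/|b|`, of length `2 cos(θ/2)`, this gives
`⟪e, c⟫ = (cos ∠(a, c) + cos ∠(c, b)) |c| ≥ 2 cos(θ/2) cos(φ/2) |c|`; summing over `c` and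
applying Cauchy–Schwarz to `⟪e, Σ c⟫` yields the claim.
-/

open InnerProductGeometry Real
open scoped RealInnerProductSpace

lemma Real.Angle.eq_of_coe_eq_of_abs_sub_lt {s t : ℝ} (h : (s : Angle) = t)
    (hst : |s - t| < 2 * π) : s = t := by
  obtain ⟨k, hk⟩ := Angle.angle_eq_iff_two_pi_dvd_sub.mp h
  rw [hk, abs_mul, abs_of_pos two_pi_pos] at hst
  have hk0 : k = 0 := by
    have : |(k : ℝ)| < 1 := by nlinarith [two_pi_pos]
    rw [← Int.cast_abs] at this
    exact Int.abs_lt_one_iff.mp (by exact_mod_cast this)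
  rw [hk0] at hk
  simpa [sub_eq_zero] using hk

lemma abs_add_abs_eq_abs_of_coe_add_eq {x y t : ℝ} (hx : |x| ≤ |t|) (hy : |y| ≤ |t|)
    (ht : |t| < 2 * π / 3) (h : ((x + y : ℝ) : Angle) = t) : |x| + |y| = |t| := by
  have hxy : x + y = t := Angle.eq_of_coe_eq_of_abs_sub_lt h <| by
    calc |x + y - t| ≤ |x| + |y| + |t| := (abs_sub _ _).trans (by gcongr; exact abs_add_le x y)
      _ < 2 * π := by linarith
  rcases abs_cases x with ⟨hx', hx0⟩ | ⟨hx', hx0⟩ <;>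
    rcases abs_cases y with ⟨hy', hy0⟩ | ⟨hy', hy0⟩ <;>
    rcases abs_cases t with ⟨ht', ht0⟩ | ⟨ht', ht0⟩ <;> linarith

section Plane

variable {V : Type*} [NormedAddCommGroup V] [InnerProductSpace ℝ V]
  [Fact (Module.finrank ℝ V = 2)]

lemma angle_add_angle_eq_of_le {a b c : V} (ha : a ≠ 0) (hb : b ≠ 0) (hc : c ≠ 0)
    (hac : angle a c ≤ angle a b) (hcb : angle c b ≤ angle a b) (hab : angle a b < 2 * π / 3) :
    angle a c + angle c b = angle a b := by
  -- Oriented angles add exactly; the bound `2π/3` excludes a wrap-around modulo `2π`.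
  have : FiniteDimensional ℝ V := .of_fact_finrank_eq_two
  let o : Orientation ℝ V (Fin 2) := (Module.finBasisOfFinrankEq ℝ V Fact.out).orientation
  rw [o.angle_eq_abs_oangle_toReal ha hc, o.angle_eq_abs_oangle_toReal hc hb,
    o.angle_eq_abs_oangle_toReal ha hb] at *
  refine abs_add_abs_eq_abs_of_coe_add_eq hac hcb hab ?_
  rw [Angle.coe_add, Angle.coe_toReal, Angle.coe_toReal, Angle.coe_toReal, o.oangle_add ha hc hb]

end Plane

lemma two_mul_cos_half_mul_cos_half_le_cos_add_cos {α β φ : ℝ} (hα : 0 ≤ α) (hβ : 0 ≤ β)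
    (hαβ : α + β ≤ φ) (hφ : φ ≤ π) :
    2 * cos ((α + β) / 2) * cos (φ / 2) ≤ cos α + cos β := by
  rw [cos_add_cos]
  have hsum : 0 ≤ cos ((α + β) / 2) := cos_nonneg_of_mem_Icc ⟨by linarith, by linarith⟩
  have hdiff : cos (φ / 2) ≤ cos ((α - β) / 2) := by
    rw [← cos_abs ((α - β) / 2)]
    apply cos_le_cos_of_nonneg_of_le_pi (abs_nonneg _) (by linarith)
    rw [abs_le]; constructor <;> linarith
  gcongr

section InnerProductSpace

variable {V : Type*} [NormedAddCommGroup V] [InnerProductSpace ℝ V]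

lemma inner_inv_norm_smul_left (a c : V) : ⟪‖a‖⁻¹ • a, c⟫ = cos (angle a c) * ‖c‖ := by
  rcases eq_or_ne a 0 with rfl | ha
  · simp
  rw [real_inner_smul_left, ← cos_angle_mul_norm_mul_norm]
  field_simp

lemma norm_inv_norm_smul_add_inv_norm_smul {a b : V} (ha : a ≠ 0) (hb : b ≠ 0) :
    ‖‖a‖⁻¹ • a + ‖b‖⁻¹ • b‖ = 2 * cos (angle a b / 2) := by
  have hcos : 0 ≤ cos (angle a b / 2) :=
    cos_nonneg_of_mem_Icc ⟨by linarith [angle_nonneg a b, pi_pos], by linarith [angle_le_pi a b]⟩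
  have hb1 : ‖‖b‖⁻¹ • b‖ = 1 := by
    rw [norm_smul, norm_inv, norm_norm, inv_mul_cancel₀ (norm_ne_zero_iff.mpr hb)]
  have ha1 : ‖‖a‖⁻¹ • a‖ = 1 := by
    rw [norm_smul, norm_inv, norm_norm, inv_mul_cancel₀ (norm_ne_zero_iff.mpr ha)]
  rw [← sq_eq_sq₀ (norm_nonneg _) (by positivity), norm_add_sq_real, inner_inv_norm_smul_left,
    angle_smul_right_of_pos _ _ (inv_pos.mpr (norm_pos_iff.mpr hb)), ha1, hb1, mul_pow, cos_sq,
    mul_div_cancel₀ _ two_ne_zero]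
  ring

lemma mul_sum_norm_le_norm_mul_norm_sum {ι : Type*} (s : Finset ι) (u : ι → V) (e : V) (r : ℝ)
    (h : ∀ j ∈ s, r * ‖u j‖ ≤ ⟪e, u j⟫) : r * ∑ j ∈ s, ‖u j‖ ≤ ‖e‖ * ‖∑ j ∈ s, u j‖ :=
  calc r * ∑ j ∈ s, ‖u j‖ ≤ ∑ j ∈ s, ⟪e, u j⟫ := by rw [Finset.mul_sum]; exact Finset.sum_le_sum h
    _ = ⟪e, ∑ j ∈ s, u j⟫ := (inner_sum s u e).symm
    _ ≤ ‖e‖ * ‖∑ j ∈ s, u j‖ := real_inner_le_norm _ _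

end InnerProductSpace

theorem barvinok_angle_lemma_general (k : ℕ) (u : Fin k → EuclideanSpace ℝ (Fin 2))
    (hu : ∀ i, u i ≠ 0) (φ : ℝ) (hφ : φ < 2 * Real.pi / 3)
    (hangle : ∀ i j, InnerProductGeometry.angle (u i) (u j) ≤ φ) :
    Real.cos (φ / 2) * ∑ j, ‖u j‖ ≤ ‖∑ j, u j‖ := by
  rcases isEmpty_or_nonempty (Fin k) with hk | hk
  · simp
  obtain ⟨⟨i₀, j₀⟩, -, hmax⟩ := Finset.univ.exists_max_image
    (fun p : Fin k × Fin k => angle (u p.1) (u p.2)) Finset.univ_nonempty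
  set θ := angle (u i₀) (u j₀)
  have hθφ : θ ≤ φ := hangle i₀ j₀
  have hcos : 0 < cos (θ / 2) :=
    cos_pos_of_mem_Ioo ⟨by linarith [angle_nonneg (u i₀) (u j₀), pi_pos], by linarith [pi_pos]⟩
  have : Fact (Module.finrank ℝ (EuclideanSpace ℝ (Fin 2)) = 2) := ⟨finrank_euclideanSpace_fin⟩
  have hinner : ∀ j ∈ Finset.univ, 2 * cos (θ / 2) * cos (φ / 2) * ‖u j‖ ≤
      ⟪‖u i₀‖⁻¹ • u i₀ + ‖u j₀‖⁻¹ • u j₀, u j⟫ := fun j _ => by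
    have hsector : angle (u i₀) (u j) + angle (u j) (u j₀) = θ :=
      angle_add_angle_eq_of_le (hu i₀) (hu j₀) (hu j) (hmax (i₀, j) (Finset.mem_univ _))
        (hmax (j, j₀) (Finset.mem_univ _)) (by linarith)
    rw [inner_add_left, inner_inv_norm_smul_left, inner_inv_norm_smul_left, ← add_mul,
      angle_comm (u j₀), ← hsector]
    gcongr
    exact two_mul_cos_half_mul_cos_half_le_cos_add_cos (angle_nonneg _ _) (angle_nonneg _ _)
      (hsector ▸ hθφ) (by linarith [pi_pos])
  have hsum := mul_sum_norm_le_norm_mul_norm_sum _ _ _ _ hinner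
  rw [norm_inv_norm_smul_add_inv_norm_smul (hu i₀) (hu j₀), mul_assoc] at hsum
  exact le_of_mul_le_mul_left hsum (by positivity)

/-- Barvinok's lemma: nonzero plane vectors pairwise making an angle at most
`φ < 2π/3` satisfy `|Σ u_j| ≥ cos(φ/2)·Σ |u_j|`. -/
theorem barvinok_angle_lemma (k : ℕ) (u : Fin k → EuclideanSpace ℝ (Fin 2))
    (hu : ∀ i, u i ≠ 0) (φ : ℝ) (hφ0 : 0 ≤ φ) (hφ : φ < 2 * Real.pi / 3)
    (hangle : ∀ i j, InnerProductGeometry.angle (u i) (u j) ≤ φ) :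
    Real.cos (φ / 2) * ∑ j, ‖u j‖ ≤ ‖∑ j, u j‖ :=
  barvinok_angle_lemma_general k u hu φ hφ hangle
end
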